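/- arXiv:2012.01998 — 9 statements merged into one kernel-verified Lean document; each statement's English description precedes it below -/
import Mathlib

section
/- (Lemma 1) Let H be a finite-dimensional complex Hilbert space, |T⟩ ∈ H a unit vector, and M_0, …, M_{n-1} Kraus operators on H (∑_i M_i† M_i = I) satisfying the fixed-point condition M_i |T⟩ = z_i |T⟩ for complex numbers z_i. Then the quantum channel $(ρ) = ∑_i M_i ρ M_i† never decreases the target fidelity: for every density operator ρ on H, F($(ρ), T) − F(ρ, T) ≥ 0, where F(ρ, T) = ⟨T|ρ|T⟩. -/
/-!
With `wᵢ = Mᵢᴴ T`, the new fidelity is `∑ ⟨wᵢ|ρ|wᵢ⟩`. The fixed-point condition and completeness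
give `∑ zᵢ wᵢ = T` and `∑ |zᵢ|² = 1`, and these two relations make the fidelity gain
`∑ ⟨wᵢ|ρ|wᵢ⟩ - ⟨T|ρ|T⟩` equal to `∑ ⟨rᵢ|ρ|rᵢ⟩` with `rᵢ = wᵢ - z̄ᵢ T` (a Pythagoras identity for the
form `⟨x|ρ|y⟩`), which is nonnegative because `ρ` is positive semidefinite.
-/

open Matrix Complex ComplexOrder

namespace Matrix

variable {ι m R : Type*} [Fintype ι] [Fintype m]

theorem star_dotProduct_mul_mul_conjTranspose_mulVec [CommSemiring R] [StarRing R]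
    (A B : Matrix m m R) (v : m → R) :
    star v ⬝ᵥ ((B * A * Bᴴ) *ᵥ v) = star (Bᴴ *ᵥ v) ⬝ᵥ (A *ᵥ (Bᴴ *ᵥ v)) := by
  rw [← mulVec_mulVec, ← mulVec_mulVec, dotProduct_mulVec, star_mulVec, conjTranspose_conjTranspose]

theorem sum_smul_conjTranspose_mulVec_of_mulVec_eq_smul [CommSemiring R] [StarRing R]
    [DecidableEq m] {M : ι → Matrix m m R} (hM : ∑ i, (M i)ᴴ * M i = 1) {z : ι → R}
    {v : m → R} (hz : ∀ i, M i *ᵥ v = z i • v) :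
    ∑ i, z i • ((M i)ᴴ *ᵥ v) = v := by
  calc ∑ i, z i • ((M i)ᴴ *ᵥ v) = ∑ i, ((M i)ᴴ * M i) *ᵥ v := by
        simp only [← mulVec_mulVec, hz, mulVec_smul]
    _ = v := by rw [← sum_mulVec, hM, one_mulVec]

theorem sum_mul_star_eq_one_of_mulVec_eq_smul [CommSemiring R] [StarRing R]
    [DecidableEq m] {M : ι → Matrix m m R} (hM : ∑ i, (M i)ᴴ * M i = 1) {z : ι → R}
    {v : m → R} (hv : star v ⬝ᵥ v = 1) (hz : ∀ i, M i *ᵥ v = z i • v) :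
    ∑ i, z i * star (z i) = 1 := by
  have hcoeff : ∀ i, star v ⬝ᵥ ((M i)ᴴ *ᵥ v) = star (z i) := fun i => by
    rw [dotProduct_mulVec, ← star_mulVec, hz, star_smul, smul_dotProduct, hv, smul_eq_mul,
      mul_one]
  calc ∑ i, z i * star (z i) = star v ⬝ᵥ ∑ i, z i • ((M i)ᴴ *ᵥ v) := by
        simp only [dotProduct_sum, dotProduct_smul, hcoeff, smul_eq_mul]
    _ = 1 := by rw [sum_smul_conjTranspose_mulVec_of_mulVec_eq_smul hM hz, hv]

theorem sum_star_sub_smul_dotProduct_mulVec_sub_smul [CommRing R] [StarRing R]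
    (A : Matrix m m R) (w : ι → m → R) (z : ι → R) (v : m → R) (hw : ∑ i, z i • w i = v)
    (hz : ∑ i, z i * star (z i) = 1) :
    ∑ i, star (w i - star (z i) • v) ⬝ᵥ (A *ᵥ (w i - star (z i) • v)) =
      ∑ i, star (w i) ⬝ᵥ (A *ᵥ w i) - star v ⬝ᵥ (A *ᵥ v) := by
  have hleft : ∑ i, star (z i) * (star (w i) ⬝ᵥ (A *ᵥ v)) = star v ⬝ᵥ (A *ᵥ v) := by
    simp only [← hw, star_sum, star_smul, sum_dotProduct, smul_dotProduct, smul_eq_mul]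
  have hright : ∑ i, z i * (star v ⬝ᵥ (A *ᵥ w i)) = star v ⬝ᵥ (A *ᵥ v) := by
    simp only [← hw, mulVec_sum, dotProduct_sum, mulVec_smul, dotProduct_smul, smul_eq_mul]
  have hdiag : ∑ i, z i * star (z i) * (star v ⬝ᵥ (A *ᵥ v)) = star v ⬝ᵥ (A *ᵥ v) := by
    rw [← Finset.sum_mul, hz, one_mul]
  calc ∑ i, star (w i - star (z i) • v) ⬝ᵥ (A *ᵥ (w i - star (z i) • v))
      = ∑ i, (star (w i) ⬝ᵥ (A *ᵥ w i) - z i * (star v ⬝ᵥ (A *ᵥ w i))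
          - star (z i) * (star (w i) ⬝ᵥ (A *ᵥ v)) + z i * star (z i) * (star v ⬝ᵥ (A *ᵥ v))) := by
        refine Finset.sum_congr rfl fun i _ => ?_
        simp only [star_sub, star_smul, star_star, mulVec_sub, mulVec_smul, sub_dotProduct,
          dotProduct_sub, smul_dotProduct, dotProduct_smul, smul_eq_mul]
        ring
    _ = ∑ i, star (w i) ⬝ᵥ (A *ᵥ w i) - star v ⬝ᵥ (A *ᵥ v) := by
        rw [Finset.sum_add_distrib, Finset.sum_sub_distrib, Finset.sum_sub_distrib, hleft, hright,
          hdiag]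
        ring

end Matrix

theorem channel_fidelity_nondecreasing_general {d n : ℕ}
    (M : Fin n → Matrix (Fin d) (Fin d) ℂ)
    (T : Fin d → ℂ) (hT : star T ⬝ᵥ T = 1)
    (hM : ∑ i, (M i)ᴴ * M i = 1)
    (z : Fin n → ℂ) (hz : ∀ i, M i *ᵥ T = z i • T)
    (ρ : Matrix (Fin d) (Fin d) ℂ) (hρ : ρ.PosSemidef) :
    0 ≤ star T ⬝ᵥ ((∑ i, M i * ρ * (M i)ᴴ) *ᵥ T) - star T ⬝ᵥ (ρ *ᵥ T) := by
  set w := fun i => (M i)ᴴ *ᵥ T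
  have hgain := sum_star_sub_smul_dotProduct_mulVec_sub_smul ρ w z T
    (sum_smul_conjTranspose_mulVec_of_mulVec_eq_smul hM hz)
    (sum_mul_star_eq_one_of_mulVec_eq_smul hM hT hz)
  calc 0 ≤ ∑ i, star (w i - star (z i) • T) ⬝ᵥ (ρ *ᵥ (w i - star (z i) • T)) :=
        Finset.sum_nonneg fun i _ => hρ.dotProduct_mulVec_nonneg _
    _ = _ := by
      rw [hgain, sum_mulVec, dotProduct_sum]
      simp only [star_dotProduct_mul_mul_conjTranspose_mulVec, w]

/-- **Lemma 1.** A quantum channel `ρ ↦ ∑ i, M i * ρ * (M i)ᴴ` whose Kraus operators satisfy the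
completeness relation and the fixed-point condition `M i *ᵥ T = z i • T` with respect to a unit
vector `T` never decreases the target fidelity `F(ρ, T) = ⟨T|ρ|T⟩`. The inequality is stated in
`ℂ` with its standard partial order (so in particular both fidelities are real). -/
theorem channel_fidelity_nondecreasing {d n : ℕ}
    (M : Fin n → Matrix (Fin d) (Fin d) ℂ)
    (T : Fin d → ℂ) (hT : star T ⬝ᵥ T = 1)
    (hM : ∑ i, (M i)ᴴ * M i = 1)
    (z : Fin n → ℂ) (hz : ∀ i, M i *ᵥ T = z i • T)
    (ρ : Matrix (Fin d) (Fin d) ℂ) (hρ : ρ.PosSemidef) (hρtr : ρ.trace = 1) :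
    0 ≤ star T ⬝ᵥ ((∑ i, M i * ρ * (M i)ᴴ) *ᵥ T) - star T ⬝ᵥ (ρ *ᵥ T) :=
  channel_fidelity_nondecreasing_general M T hT hM z hz ρ hρ
end

section
/- (Lemma 2) Let H be a finite-dimensional complex Hilbert space, |T⟩ ∈ H a unit vector, and M_0, …, M_{n-1} Kraus operators (∑_i M_i† M_i = I) satisfying M_i |T⟩ = z_i |T⟩ for complex numbers z_i. The quantum channel $(ρ) = ∑_i M_i ρ M_i† strictly increases the target fidelity, F($(ρ), T) − F(ρ, T) > 0, for every density operator ρ ≠ |T⟩⟨T|, if and only if the vectors M_0†|T⟩, …, M_{n-1}†|T⟩ span H. -/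
/-!
Write `w i = (M i)ᴴ T - conj (z i) • T`. The fixed-point condition and completeness give
`∑ i, |z i|² = 1` and `∑ i, z i • w i = 0`, so the cross terms cancel in
`⟨T|$(ρ)|T⟩ = ⟨T|ρ|T⟩ + ∑ i, ⟨w i|ρ|w i⟩`, and the fidelity gain is a sum of nonnegative terms.
If the `(M i)ᴴ T` span, a density matrix with zero gain kills every `w i`, hence agrees with
`|ρ T⟩⟨T|` on a spanning set; a Hermitian rank-one matrix `|a⟩⟨T|` of trace one is `|T⟩⟨T|`.
Otherwise a unit vector orthogonal to every `(M i)ᴴ T` is orthogonal to `T = ∑ i, z i • (M i)ᴴ T`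
and to every `w i`, so its pure state has zero gain.
-/

open Matrix Complex ComplexOrder

theorem Matrix.exists_ne_zero_forall_dotProduct_eq_zero {K m ι : Type*} [Field K] [Fintype m]
    [DecidableEq m] {v : ι → m → K} (hv : Submodule.span K (Set.range v) ≠ ⊤) :
    ∃ c ≠ 0, ∀ i, c ⬝ᵥ v i = 0 := by
  obtain ⟨f, hf, hker⟩ := Submodule.exists_le_ker_of_lt_top _ (lt_top_iff_ne_top.mpr hv)
  set e := dotProductEquiv K m
  exact ⟨e.symm f, by simpa using hf, fun i =>
    (congrArg (· (v i)) (e.apply_symm_apply f)).trans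
      (LinearMap.mem_ker.mp (hker (Submodule.subset_span ⟨i, rfl⟩)))⟩

theorem Matrix.exists_unit_forall_star_dotProduct_eq_zero {m ι : Type*} [Fintype m]
    [DecidableEq m] {v : ι → m → ℂ} (hv : Submodule.span ℂ (Set.range v) ≠ ⊤) :
    ∃ u : m → ℂ, star u ⬝ᵥ u = 1 ∧ ∀ i, star u ⬝ᵥ v i = 0 := by
  obtain ⟨c, hc, hcv⟩ := exists_ne_zero_forall_dotProduct_eq_zero hv
  have hpos : 0 < c ⬝ᵥ star c := by
    simpa using dotProduct_star_self_pos_iff.mpr (star_ne_zero.mpr hc)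
  set s := (c ⬝ᵥ star c).re
  have hcc : c ⬝ᵥ star c = s := eq_re_of_ofReal_le (r := 0) (by simp [hpos.le])
  have hs : 0 < s := (pos_iff.mp hpos).1
  refine ⟨((√s)⁻¹ : ℝ) • star c, ?_, fun i => ?_⟩
  · rw [star_smul, star_star, smul_dotProduct, dotProduct_smul, hcc]
    simp only [star_trivial, Complex.real_smul]
    norm_cast
    field_simp
    exact (Real.sq_sqrt hs.le).symm
  · rw [star_smul, star_star, smul_dotProduct, hcv i, smul_zero]

theorem Matrix.IsHermitian.eq_of_vecMulVec_star {m : Type*} [Fintype m] {a T : m → ℂ}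
    (hH : (vecMulVec a (star T)).IsHermitian) (htr : (vecMulVec a (star T)).trace = 1)
    (hT : star T ⬝ᵥ T = 1) : a = T := by
  have ha : a = (star a ⬝ᵥ T) • T := by
    have h := congrArg (· *ᵥ T) hH.eq
    simpa [vecMulVec_mulVec, hT] using h.symm
  have hc : star a ⬝ᵥ T = 1 := by
    rwa [trace_vecMulVec, ha, smul_dotProduct, dotProduct_comm T, hT, smul_eq_mul, mul_one] at htr
  rw [ha, hc, one_smul]

section Kraus

variable {m ι : Type*} [Fintype m]
  {M : ι → Matrix m m ℂ} {T : m → ℂ} {z : ι → ℂ}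

/-- The part of `(M i)ᴴ T` orthogonal to `T`: its component along `T` is
`⟪T, (M i)ᴴ T⟫ = conj (z i)`. -/
def krausResidual (M : ι → Matrix m m ℂ) (T : m → ℂ) (z : ι → ℂ) (i : ι) : m → ℂ :=
  (M i)ᴴ *ᵥ T - star (z i) • T

theorem star_dotProduct_conjTranspose_mulVec (hT : star T ⬝ᵥ T = 1)
    (hz : ∀ i, M i *ᵥ T = z i • T) (i : ι) : star T ⬝ᵥ ((M i)ᴴ *ᵥ T) = star (z i) := by
  rw [dotProduct_mulVec, ← star_mulVec, hz i, star_smul, smul_dotProduct, hT, smul_eq_mul,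
    mul_one]

theorem sum_smul_conjTranspose_mulVec [DecidableEq m] [Fintype ι] (hM : ∑ i, (M i)ᴴ * M i = 1)
    (hz : ∀ i, M i *ᵥ T = z i • T) : ∑ i, z i • ((M i)ᴴ *ᵥ T) = T := by
  simp_rw [← mulVec_smul, ← hz, mulVec_mulVec, ← sum_mulVec, hM, one_mulVec]

theorem sum_mul_star_eq_one [DecidableEq m] [Fintype ι] (hT : star T ⬝ᵥ T = 1)
    (hM : ∑ i, (M i)ᴴ * M i = 1) (hz : ∀ i, M i *ᵥ T = z i • T) : ∑ i, z i * star (z i) = 1 := by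
  have h := congrArg (star T ⬝ᵥ ·) (sum_smul_conjTranspose_mulVec hM hz)
  simpa [dotProduct_sum, star_dotProduct_conjTranspose_mulVec hT hz, hT] using h

theorem sum_smul_krausResidual [DecidableEq m] [Fintype ι] (hT : star T ⬝ᵥ T = 1)
    (hM : ∑ i, (M i)ᴴ * M i = 1) (hz : ∀ i, M i *ᵥ T = z i • T) :
    ∑ i, z i • krausResidual M T z i = 0 := by
  simp_rw [krausResidual, smul_sub, Finset.sum_sub_distrib, smul_smul, ← Finset.sum_smul,
    sum_smul_conjTranspose_mulVec hM hz, sum_mul_star_eq_one hT hM hz, one_smul, sub_self]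

theorem star_dotProduct_channel_mulVec [DecidableEq m] [Fintype ι] (hT : star T ⬝ᵥ T = 1)
    (hM : ∑ i, (M i)ᴴ * M i = 1) (hz : ∀ i, M i *ᵥ T = z i • T) (ρ : Matrix m m ℂ) :
    star T ⬝ᵥ ((∑ i, M i * ρ * (M i)ᴴ) *ᵥ T) =
      star T ⬝ᵥ (ρ *ᵥ T) + ∑ i, star (krausResidual M T z i) ⬝ᵥ (ρ *ᵥ krausResidual M T z i) := by
  set w := krausResidual M T z
  have hterm (i : ι) : star T ⬝ᵥ ((M i * ρ * (M i)ᴴ) *ᵥ T) =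
      z i * star (z i) * (star T ⬝ᵥ (ρ *ᵥ T)) + star T ⬝ᵥ (ρ *ᵥ (z i • w i))
        + star (z i • w i) ⬝ᵥ (ρ *ᵥ T) + star (w i) ⬝ᵥ (ρ *ᵥ w i) := by
    have hTM : star T ᵥ* M i = star ((M i)ᴴ *ᵥ T) := by
      rw [star_mulVec, conjTranspose_conjTranspose]
    have hv : (M i)ᴴ *ᵥ T = star (z i) • T + w i := (add_sub_cancel _ _).symm
    rw [← mulVec_mulVec, ← mulVec_mulVec, dotProduct_mulVec, hTM, hv]
    simp only [mulVec_add, mulVec_smul, dotProduct_add, add_dotProduct, star_add, star_smul,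
      smul_dotProduct, dotProduct_smul, smul_eq_mul, star_star]
    ring
  simp_rw [sum_mulVec, dotProduct_sum, hterm, Finset.sum_add_distrib, ← Finset.sum_mul,
    ← dotProduct_sum, ← mulVec_sum, ← sum_dotProduct, ← star_sum, w,
    sum_mul_star_eq_one hT hM hz, sum_smul_krausResidual hT hM hz]
  simp

theorem exists_density_sum_star_dotProduct_krausResidual_eq_zero [DecidableEq m] [Fintype ι]
    (hT : star T ⬝ᵥ T = 1) (hM : ∑ i, (M i)ᴴ * M i = 1) (hz : ∀ i, M i *ᵥ T = z i • T)
    (hspan : Submodule.span ℂ (Set.range fun i => (M i)ᴴ *ᵥ T) ≠ ⊤) :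
    ∃ ρ : Matrix m m ℂ, ρ.PosSemidef ∧ ρ.trace = 1 ∧ ρ ≠ vecMulVec T (star T) ∧
      ∑ i, star (krausResidual M T z i) ⬝ᵥ (ρ *ᵥ krausResidual M T z i) = 0 := by
  obtain ⟨u, hu, huv⟩ := exists_unit_forall_star_dotProduct_eq_zero hspan
  have huT : star u ⬝ᵥ T = 0 := by
    rw [← sum_smul_conjTranspose_mulVec hM hz, dotProduct_sum]
    simp [huv]
  have huw (i : ι) : star u ⬝ᵥ krausResidual M T z i = 0 := by
    simp [krausResidual, dotProduct_sub, huv, huT]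
  refine ⟨vecMulVec u (star u), posSemidef_vecMulVec_self_star u,
    by rwa [trace_vecMulVec, dotProduct_comm], fun h => ?_, by simp [vecMulVec_mulVec, huw]⟩
  have hT0 : 0 = T := by simpa [vecMulVec_mulVec, huT, hT] using congrArg (· *ᵥ T) h
  simp [← hT0] at hT

theorem eq_vecMulVec_of_mulVec_krausResidual_eq_zero (hT : star T ⬝ᵥ T = 1)
    (hz : ∀ i, M i *ᵥ T = z i • T)
    (hspan : Submodule.span ℂ (Set.range fun i => (M i)ᴴ *ᵥ T) = ⊤) {ρ : Matrix m m ℂ}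
    (hρ : ∀ i, ρ *ᵥ krausResidual M T z i = 0) : ρ = vecMulVec (ρ *ᵥ T) (star T) := by
  classical
  refine toLin'.injective (LinearMap.ext_on_range hspan fun i => ?_)
  have hv : (M i)ᴴ *ᵥ T = star (z i) • T + krausResidual M T z i := (add_sub_cancel _ _).symm
  simp only [toLin'_apply, vecMulVec_mulVec, star_dotProduct_conjTranspose_mulVec hT hz]
  rw [hv, mulVec_add, mulVec_smul, hρ i, add_zero, op_smul_eq_smul]

theorem sum_star_dotProduct_krausResidual_pos [Fintype ι] (hT : star T ⬝ᵥ T = 1)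
    (hz : ∀ i, M i *ᵥ T = z i • T)
    (hspan : Submodule.span ℂ (Set.range fun i => (M i)ᴴ *ᵥ T) = ⊤) {ρ : Matrix m m ℂ}
    (hρ : ρ.PosSemidef) (htr : ρ.trace = 1) (hne : ρ ≠ vecMulVec T (star T)) :
    0 < ∑ i, star (krausResidual M T z i) ⬝ᵥ (ρ *ᵥ krausResidual M T z i) := by
  have hnonneg (i : ι) (_ : i ∈ Finset.univ) :
      0 ≤ star (krausResidual M T z i) ⬝ᵥ (ρ *ᵥ krausResidual M T z i) :=
    hρ.dotProduct_mulVec_nonneg _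
  refine (Finset.sum_nonneg hnonneg).lt_of_ne' fun hsum => hne ?_
  have hkill (i : ι) : ρ *ᵥ krausResidual M T z i = 0 :=
    (hρ.dotProduct_mulVec_zero_iff _).mp
      ((Finset.sum_eq_zero_iff_of_nonneg hnonneg).mp hsum i (Finset.mem_univ i))
  have hρT := eq_vecMulVec_of_mulVec_krausResidual_eq_zero hT hz hspan hkill
  have hρT_eq : ρ *ᵥ T = T :=
    IsHermitian.eq_of_vecMulVec_star (hρT ▸ hρ.isHermitian) (hρT ▸ htr) hT
  rw [hρT, hρT_eq]

end Kraus

/-- **Lemma 2.** The channel `ρ ↦ ∑ i, M i * ρ * (M i)ᴴ` with Kraus operators satisfying the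
completeness relation and the fixed-point condition with respect to a unit vector `T` strictly
increases the target fidelity `F(ρ, T) = ⟨T|ρ|T⟩` for every density operator `ρ ≠ |T⟩⟨T|`
if and only if the vectors `(M i)ᴴ *ᵥ T` span the whole space. -/
theorem strict_fidelity_increase_iff_span {d n : ℕ}
    (M : Fin n → Matrix (Fin d) (Fin d) ℂ)
    (T : Fin d → ℂ) (hT : star T ⬝ᵥ T = 1)
    (hM : ∑ i, (M i)ᴴ * M i = 1)
    (z : Fin n → ℂ) (hz : ∀ i, M i *ᵥ T = z i • T) :
    (∀ ρ : Matrix (Fin d) (Fin d) ℂ, ρ.PosSemidef → ρ.trace = 1 →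
        ρ ≠ vecMulVec T (star T) →
        star T ⬝ᵥ (ρ *ᵥ T) < star T ⬝ᵥ ((∑ i, M i * ρ * (M i)ᴴ) *ᵥ T)) ↔
      Submodule.span ℂ (Set.range fun i => (M i)ᴴ *ᵥ T) = ⊤ := by
  simp_rw [star_dotProduct_channel_mulVec hT hM hz, lt_add_iff_pos_right]
  constructor
  · intro hgain
    by_contra hspan
    obtain ⟨ρ, hρ, htr, hne, hzero⟩ :=
      exists_density_sum_star_dotProduct_krausResidual_eq_zero hT hM hz hspan
    exact (hgain ρ hρ htr hne).ne' hzero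
  · exact fun hspan ρ hρ htr hne =>
      sum_star_dotProduct_krausResidual_pos hT hz hspan hρ htr hne
end

section
/- Let H be a finite-dimensional complex Hilbert space, |T⟩ ∈ H a unit vector, and M_0, …, M_{n-1} Kraus operators (∑_i M_i† M_i = I) satisfying M_i |T⟩ = z_i |T⟩ for complex numbers z_i. If the vectors M_0†|T⟩, …, M_{n-1}†|T⟩ do not span H, then there exists a nonzero vector |ψ⊥⟩ ∈ H such that ⟨ψ⊥|T⟩ = 0 and the pure state ρ = |ψ⊥⟩⟨ψ⊥|/⟨ψ⊥|ψ⊥⟩ satisfies F($(ρ), T) = F(ρ, T), where $(ρ) = ∑_i M_i ρ M_i† and F(ρ, T) = ⟨T|ρ|T⟩. -/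
/-!
Choose `ψ ≠ 0` orthogonal to every `(M i)ᴴ *ᵥ T`. Since `T = (∑ i, (M i)ᴴ * M i) *ᵥ T = ∑ i, z i • (M i)ᴴ *ᵥ T`,
`ψ` is orthogonal to `T` too. The output fidelity is `∑ ⟨(M i)ᴴ T| ρ |(M i)ᴴ T⟩`, and the pure state
`ρ` of `ψ` annihilates every vector orthogonal to `ψ`, so both fidelities vanish.
-/

open Matrix Complex ComplexOrder

open Submodule in
theorem Matrix.exists_ne_zero_dotProduct_eq_zero_of_span_ne_top {K ι m : Type*} [Field K]
    [Fintype m] {v : ι → m → K} (h : span K (Set.range v) ≠ ⊤) :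
    ∃ w ≠ 0, ∀ i, w ⬝ᵥ v i = 0 := by
  classical
  obtain ⟨f, hf, hle⟩ := (span K (Set.range v)).exists_le_ker_of_lt_top h.lt_top
  refine ⟨(dotProductEquiv K m).symm f, by simpa using hf, fun i => ?_⟩
  have hfv : f (v i) = 0 := hle (subset_span ⟨i, rfl⟩)
  rwa [← (dotProductEquiv K m).apply_symm_apply f] at hfv

theorem Matrix.dotProduct_eq_zero_of_forall_dotProduct_conjTranspose_mulVec_eq_zero
    {R ι m : Type*} [CommSemiring R] [StarRing R] [Fintype ι] [Fintype m] [DecidableEq m]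
    {M : ι → Matrix m m R} {T u : m → R} {z : ι → R}
    (hM : ∑ i, (M i)ᴴ * M i = 1) (hz : ∀ i, M i *ᵥ T = z i • T)
    (hu : ∀ i, u ⬝ᵥ ((M i)ᴴ *ᵥ T) = 0) : u ⬝ᵥ T = 0 :=
  calc u ⬝ᵥ T = u ⬝ᵥ ((∑ i, (M i)ᴴ * M i) *ᵥ T) := by rw [hM, one_mulVec]
    _ = ∑ i, z i * u ⬝ᵥ ((M i)ᴴ *ᵥ T) := by
      simp only [sum_mulVec, dotProduct_sum, ← mulVec_mulVec, hz, mulVec_smul, dotProduct_smul,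
        smul_eq_mul]
    _ = 0 := by simp only [hu, mul_zero, Finset.sum_const_zero]

theorem Matrix.star_dotProduct_mul_mul_conjTranspose_mulVec_s4 {R m n : Type*} [Semiring R]
    [StarRing R] [Fintype m] [Fintype n] (A : Matrix m n R) (B : Matrix n n R) (x : m → R) :
    star x ⬝ᵥ ((A * B * Aᴴ) *ᵥ x) = star (Aᴴ *ᵥ x) ⬝ᵥ (B *ᵥ (Aᴴ *ᵥ x)) := by
  rw [← mulVec_mulVec, ← mulVec_mulVec, dotProduct_mulVec, star_mulVec, conjTranspose_conjTranspose]

theorem Matrix.smul_vecMulVec_mulVec_of_dotProduct_eq_zero {R m n : Type*} [CommSemiring R]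
    [Fintype n] (c : R) (u : m → R) {v w : n → R} (h : v ⬝ᵥ w = 0) :
    (c • vecMulVec u v) *ᵥ w = 0 := by
  simp [smul_mulVec, vecMulVec_mulVec, h]

theorem exists_orthogonal_state_with_zero_fidelity_increment_general {d n : ℕ}
    (M : Fin n → Matrix (Fin d) (Fin d) ℂ)
    (T : Fin d → ℂ)
    (hM : ∑ i, (M i)ᴴ * M i = 1)
    (z : Fin n → ℂ) (hz : ∀ i, M i *ᵥ T = z i • T)
    (hspan : Submodule.span ℂ (Set.range fun i => (M i)ᴴ *ᵥ T) ≠ ⊤) :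
    ∃ ψ : Fin d → ℂ, ψ ≠ 0 ∧ star ψ ⬝ᵥ T = 0 ∧
      star T ⬝ᵥ ((∑ i, M i * ((star ψ ⬝ᵥ ψ)⁻¹ • vecMulVec ψ (star ψ)) * (M i)ᴴ) *ᵥ T) =
        star T ⬝ᵥ (((star ψ ⬝ᵥ ψ)⁻¹ • vecMulVec ψ (star ψ)) *ᵥ T) := by
  obtain ⟨w, hw0, hw⟩ := exists_ne_zero_dotProduct_eq_zero_of_span_ne_top hspan
  have hwT : w ⬝ᵥ T = 0 :=
    dotProduct_eq_zero_of_forall_dotProduct_conjTranspose_mulVec_eq_zero hM hz hw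
  refine ⟨star w, star_ne_zero.2 hw0, by rwa [star_star], ?_⟩
  simp only [star_star, sum_mulVec, dotProduct_sum, star_dotProduct_mul_mul_conjTranspose_mulVec_s4,
    smul_vecMulVec_mulVec_of_dotProduct_eq_zero _ _ (hw _),
    smul_vecMulVec_mulVec_of_dotProduct_eq_zero _ _ hwT, dotProduct_zero, Finset.sum_const_zero]

/-- If the vectors `(M i)ᴴ *ᵥ T` do not span the space, then there is a nonzero vector `ψ`
orthogonal to the target `T` such that the pure state `ρ = |ψ⟩⟨ψ| / ⟨ψ|ψ⟩` has vanishing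
fidelity increment under the channel `ρ ↦ ∑ i, M i * ρ * (M i)ᴴ`. -/
theorem exists_orthogonal_state_with_zero_fidelity_increment {d n : ℕ}
    (M : Fin n → Matrix (Fin d) (Fin d) ℂ)
    (T : Fin d → ℂ) (hT : star T ⬝ᵥ T = 1)
    (hM : ∑ i, (M i)ᴴ * M i = 1)
    (z : Fin n → ℂ) (hz : ∀ i, M i *ᵥ T = z i • T)
    (hspan : Submodule.span ℂ (Set.range fun i => (M i)ᴴ *ᵥ T) ≠ ⊤) :
    ∃ ψ : Fin d → ℂ, ψ ≠ 0 ∧ star ψ ⬝ᵥ T = 0 ∧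
      star T ⬝ᵥ ((∑ i, M i * ((star ψ ⬝ᵥ ψ)⁻¹ • vecMulVec ψ (star ψ)) * (M i)ᴴ) *ᵥ T) =
        star T ⬝ᵥ (((star ψ ⬝ᵥ ψ)⁻¹ • vecMulVec ψ (star ψ)) *ᵥ T) :=
  exists_orthogonal_state_with_zero_fidelity_increment_general M T hM z hz hspan
end

section
/- Let H be a finite-dimensional complex Hilbert space, |T⟩ ∈ H a unit vector, and M_0, …, M_{n-1} Kraus operators (∑_i M_i† M_i = I) satisfying M_i |T⟩ = z_i |T⟩ for complex numbers z_i, and such that the vectors M_0†|T⟩, …, M_{n-1}†|T⟩ span H. Then |T⟩⟨T| is the unique fixed point of the channel $(ρ) = ∑_i M_i ρ M_i† among density operators: if ρ is a density operator with $(ρ) = ρ, then ρ = |T⟩⟨T|. -/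
open Matrix Complex ComplexOrder

/-! Write `P = |T⟩⟨T|` and let `A = ∑ᵢ Mᵢ† P Mᵢ` be the image of `P` under the dual channel.
Since `A = ∑ᵢ |Mᵢ†T⟩⟨Mᵢ†T|` and the `Mᵢ†T` span, `A` is positive definite; the eigen-condition
and completeness give `A T = T`, so `A - P ≥ 0` and `P A = P`. Trace duality turns `Φ(ρ) = ρ` into
`tr(ρ (A - P)) = 0`, and a vanishing trace of a product of positive matrices forces the product
itself to vanish. Thus `ρ (1 - P) A = ρ (A - P) = 0`, hence `ρ = ρ P` because `A` is invertible,
and a Hermitian `ρ` with `ρ = ρ P` is a multiple of `P`, the multiple being `tr ρ = 1`. -/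

namespace Matrix

variable {𝕜 n : Type*} [RCLike 𝕜] [Fintype n]

open scoped MatrixOrder in
theorem PosSemidef.mul_eq_zero_of_trace_mul_eq_zero {X Y : Matrix n n 𝕜} (hX : X.PosSemidef)
    (hY : Y.PosSemidef) (h : (X * Y).trace = 0) : X * Y = 0 := by
  classical
  obtain ⟨S, rfl⟩ := CStarAlgebra.nonneg_iff_eq_star_mul_self.mp hX.nonneg
  obtain ⟨R, rfl⟩ := CStarAlgebra.nonneg_iff_eq_star_mul_self.mp hY.nonneg
  simp only [star_eq_conjTranspose] at h ⊢
  -- `tr (Sᴴ S Rᴴ R) = tr ((S Rᴴ)ᴴ (S Rᴴ))`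
  have hSR : S * Rᴴ = 0 := by
    rw [← trace_conjTranspose_mul_self_eq_zero_iff, ← h]
    simp only [conjTranspose_mul, conjTranspose_conjTranspose, Matrix.mul_assoc]
    rw [trace_mul_comm]
    simp only [Matrix.mul_assoc]
  rw [Matrix.mul_assoc, ← Matrix.mul_assoc S, hSR, Matrix.zero_mul, Matrix.mul_zero]

theorem eq_zero_of_forall_dotProduct_eq_zero_of_span_eq_top {ι : Type*} [Fintype ι]
    {v : ι → n → 𝕜} (hv : Submodule.span 𝕜 (Set.range v) = ⊤) {x : n → 𝕜}
    (hx : ∀ i, star (v i) ⬝ᵥ x = 0) : x = 0 := by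
  have hx_mem : x ∈ Submodule.span 𝕜 (Set.range v) := hv ▸ Submodule.mem_top
  obtain ⟨c, hc⟩ := (Submodule.mem_span_range_iff_exists_fun 𝕜).mp hx_mem
  rw [← dotProduct_star_self_eq_zero]
  nth_rw 2 [← hc]
  rw [dotProduct_sum]
  refine Finset.sum_eq_zero fun i _ => ?_
  rw [dotProduct_smul, star_dotProduct, hx, star_zero, smul_zero]

theorem posDef_sum_vecMulVec_self_star {ι : Type*} [Fintype ι] {v : ι → n → 𝕜}
    (hv : Submodule.span 𝕜 (Set.range v) = ⊤) :
    (∑ i, vecMulVec (v i) (star (v i))).PosDef := by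
  let B : Matrix ι n 𝕜 := of fun i j => star (v i j)
  have hB : ∑ i, vecMulVec (v i) (star (v i)) = Bᴴ * B := by
    ext j k
    simp [B, mul_apply, vecMulVec_apply, Matrix.sum_apply]
  rw [hB]
  refine .conjTranspose_mul_self B <| (injective_iff_map_eq_zero B.mulVecLin).mpr fun x hx =>
    eq_zero_of_forall_dotProduct_eq_zero_of_span_eq_top hv fun i => congrFun hx i

theorem trace_sum_mul_mul_mul {R ι : Type*} [CommSemiring R] [Fintype ι]
    (K L : ι → Matrix n n R) (ρ X : Matrix n n R) :
    ((∑ i, K i * ρ * L i) * X).trace = (ρ * ∑ i, L i * X * K i).trace := by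
  rw [Finset.sum_mul, Finset.mul_sum, trace_sum, trace_sum]
  refine Finset.sum_congr rfl fun i _ => ?_
  simp only [Matrix.mul_assoc]
  rw [trace_mul_comm]
  simp only [Matrix.mul_assoc]

theorem conjTranspose_mul_vecMulVec_self_star_mul (B : Matrix n n 𝕜) (x : n → 𝕜) :
    Bᴴ * vecMulVec x (star x) * B = vecMulVec (Bᴴ *ᵥ x) (star (Bᴴ *ᵥ x)) := by
  rw [mul_vecMulVec, vecMulVec_mul, star_mulVec, conjTranspose_conjTranspose]

section RankOneProjection

variable {T : n → 𝕜} {A : Matrix n n 𝕜}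

theorem vecMulVec_star_mul_of_mulVec_eq (hA : A.IsHermitian) (hAT : A *ᵥ T = T) :
    vecMulVec T (star T) * A = vecMulVec T (star T) := by
  rw [vecMulVec_mul, ← hA.eq, ← star_mulVec, hAT]

theorem PosSemidef.sub_vecMulVec_of_mulVec_eq [DecidableEq n] (hA : A.PosSemidef)
    (hT : star T ⬝ᵥ T = 1) (hAT : A *ᵥ T = T) : (A - vecMulVec T (star T)).PosSemidef := by
  have hconj : (1 - vecMulVec T (star T))ᴴ * A * (1 - vecMulVec T (star T)) =
      A - vecMulVec T (star T) := by
    rw [conjTranspose_sub, conjTranspose_one, conjTranspose_vecMulVec, star_star, Matrix.sub_mul,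
      Matrix.one_mul, vecMulVec_star_mul_of_mulVec_eq hA.isHermitian hAT, Matrix.mul_sub,
      Matrix.mul_one, Matrix.sub_mul, mul_vecMulVec, hAT, vecMulVec_mul_vecMulVec, hT, one_smul,
      sub_self, sub_zero]
  exact hconj ▸ hA.conjTranspose_mul_mul_same _

theorem IsHermitian.eq_vecMulVec_of_mul_vecMulVec_eq {ρ : Matrix n n 𝕜} (hρ : ρ.IsHermitian)
    (hT : star T ⬝ᵥ T = 1) (htr : ρ.trace = 1) (h : ρ * vecMulVec T (star T) = ρ) :
    ρ = vecMulVec T (star T) := by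
  set P := vecMulVec T (star T)
  have hPρ : P * ρ = ρ := by
    simpa only [P, conjTranspose_mul, conjTranspose_vecMulVec, star_star, hρ.eq] using
      congrArg (·ᴴ) h
  have hρP : ρ = (star T ⬝ᵥ (ρ *ᵥ T)) • P := by
    calc ρ = P * ρ * P := by rw [hPρ, h]
      _ = (star T ⬝ᵥ (ρ *ᵥ T)) • P := by
        rw [mul_vecMulVec, ← mulVec_mulVec, vecMulVec_mulVec, op_smul_eq_smul, smul_vecMulVec]
  rw [hρP, trace_smul, trace_vecMulVec, dotProduct_comm T, hT, smul_eq_mul, mul_one] at htr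
  rw [hρP, htr, one_smul]

end RankOneProjection

end Matrix

/-- If the Kraus operators `M i` satisfy the completeness relation and the fixed-point condition
with respect to a unit vector `T`, and the vectors `(M i)ᴴ *ᵥ T` span the whole space, then
`|T⟩⟨T|` is the unique fixed point of the channel `ρ ↦ ∑ i, M i * ρ * (M i)ᴴ` among density
operators. -/
theorem target_state_unique_fixed_point {d n : ℕ}
    (M : Fin n → Matrix (Fin d) (Fin d) ℂ)
    (T : Fin d → ℂ) (hT : star T ⬝ᵥ T = 1)
    (hM : ∑ i, (M i)ᴴ * M i = 1)
    (z : Fin n → ℂ) (hz : ∀ i, M i *ᵥ T = z i • T)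
    (hspan : Submodule.span ℂ (Set.range fun i => (M i)ᴴ *ᵥ T) = ⊤)
    (ρ : Matrix (Fin d) (Fin d) ℂ) (hρ : ρ.PosSemidef) (hρtr : ρ.trace = 1)
    (hfix : ∑ i, M i * ρ * (M i)ᴴ = ρ) :
    ρ = vecMulVec T (star T) := by
  set P := vecMulVec T (star T)
  set A := ∑ i, (M i)ᴴ * P * M i
  have hA : A.PosDef := by
    have hA_sum : A = ∑ i, vecMulVec ((M i)ᴴ *ᵥ T) (star ((M i)ᴴ *ᵥ T)) :=
      Finset.sum_congr rfl fun i _ => conjTranspose_mul_vecMulVec_self_star_mul (M i) T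
    exact hA_sum ▸ posDef_sum_vecMulVec_self_star hspan
  have hAT : A *ᵥ T = T := by
    have hPT : P *ᵥ T = T := by rw [vecMulVec_mulVec, hT, MulOpposite.op_one, one_smul]
    calc A *ᵥ T = ∑ i, (M i)ᴴ *ᵥ (P *ᵥ (M i *ᵥ T)) := by
          simp only [A, sum_mulVec, ← mulVec_mulVec]
      _ = ∑ i, ((M i)ᴴ * M i) *ᵥ T := Finset.sum_congr rfl fun i _ => by
        rw [hz, mulVec_smul, hPT, ← hz, mulVec_mulVec]
      _ = T := by rw [← sum_mulVec, hM, one_mulVec]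
  have htr : (ρ * (A - P)).trace = 0 := by
    rw [Matrix.mul_sub, trace_sub, ← trace_sum_mul_mul_mul, hfix, sub_self]
  have hρAP : ρ * (A - P) = 0 :=
    hρ.mul_eq_zero_of_trace_mul_eq_zero (hA.posSemidef.sub_vecMulVec_of_mulVec_eq hT hAT) htr
  have hρP : ρ * P = ρ := by
    have : (ρ - ρ * P) * A = 0 := by
      rw [Matrix.sub_mul, Matrix.mul_assoc, vecMulVec_star_mul_of_mulVec_eq hA.isHermitian hAT,
        ← Matrix.mul_sub, hρAP]
    exact (sub_eq_zero.mp (hA.isUnit.mul_left_eq_zero.mp this)).symm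
  exact hρ.isHermitian.eq_vecMulVec_of_mul_vecMulVec_eq hT hρtr hρP
end

section
/- Let H be a finite-dimensional complex Hilbert space, {E_i}_{i=0,…,n-1} a POVM on H (each E_i positive semidefinite, ∑_i E_i = I), and |T⟩ ∈ H a unit vector such that the vectors E_0|T⟩, …, E_{n-1}|T⟩ span H. For each i choose a unitary U_i on H such that U_i √E_i |T⟩ is proportional to |T⟩ whenever E_i|T⟩ ≠ 0 (and U_i arbitrary otherwise), and set M_i = U_i √E_i. Then the M_i form a set of Kraus operators (∑_i M_i† M_i = I) satisfying the fixed-point condition M_i|T⟩ = z_i|T⟩ for some z_i ∈ ℂ, and the vectors M_0†|T⟩, …, M_{n-1}†|T⟩ span H. -/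
open Matrix Complex ComplexOrder

/-- The positive semidefinite square root of a positive semidefinite matrix
(the definition `Matrix.PosSemidef.sqrt` of the older Mathlib, since removed). -/
noncomputable def Matrix.PosSemidef.sqrt {n : Type*} [Fintype n] [DecidableEq n] {𝕜 : Type*}
    [RCLike 𝕜] {A : Matrix n n 𝕜} (hA : A.PosSemidef) : Matrix n n 𝕜 :=
  (hA.1.eigenvectorUnitary : Matrix n n 𝕜) * diagonal ((↑) ∘ (√·) ∘ hA.1.eigenvalues) *
    (star (hA.1.eigenvectorUnitary : Matrix n n 𝕜))

/-! Since `√E` is Hermitian and squares to `E`, `(U √E)ᴴ (U √E) = E` for unitary `U`, which gives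
the Kraus condition. Where `E T = 0` also `√E T = 0`, so the fixed-point condition holds there with
`z = 0`. Finally `E T = (U √E)ᴴ (U √E) T = z (U √E)ᴴ T`, so the span of the `(U √E)ᴴ T` contains
that of the `E T`. -/

namespace Matrix

variable {m 𝕜 : Type*} [Fintype m] [RCLike 𝕜]

namespace PosSemidef

variable [DecidableEq m] {A : Matrix m m 𝕜}

theorem posSemidef_sqrt (hA : A.PosSemidef) : hA.sqrt.PosSemidef := by
  have hD : (diagonal ((RCLike.ofReal ∘ (√·) ∘ hA.1.eigenvalues : m → 𝕜))).PosSemidef :=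
    PosSemidef.diagonal fun i => RCLike.ofReal_nonneg.mpr (Real.sqrt_nonneg _)
  simpa only [sqrt, star_eq_conjTranspose] using
    hD.mul_mul_conjTranspose_same (hA.1.eigenvectorUnitary : Matrix m m 𝕜)

theorem sqrt_mul_self (hA : A.PosSemidef) : hA.sqrt * hA.sqrt = A := by
  set V : Matrix m m 𝕜 := (hA.1.eigenvectorUnitary : Matrix m m 𝕜)
  set D : Matrix m m 𝕜 := diagonal (RCLike.ofReal ∘ (√·) ∘ hA.1.eigenvalues)
  have hV : star V * V = 1 := hA.1.eigenvectorUnitary.2.1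
  have hD : D * D = diagonal (RCLike.ofReal ∘ hA.1.eigenvalues) := by
    rw [diagonal_mul_diagonal]
    congr 1
    funext i
    simp only [Function.comp_apply, ← RCLike.ofReal_mul,
      Real.mul_self_sqrt (hA.eigenvalues_nonneg i)]
  calc hA.sqrt * hA.sqrt = V * (D * (star V * V) * D) * star V := by
        simp only [sqrt, V, D, Matrix.mul_assoc]
    _ = A := by
        rw [hV, Matrix.mul_one, hD]
        conv_rhs => rw [hA.1.spectral_theorem, Unitary.conjStarAlgAut_apply]

theorem sqrt_mulVec_eq_zero (hA : A.PosSemidef) {v : m → 𝕜} (hv : A *ᵥ v = 0) :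
    hA.sqrt *ᵥ v = 0 := by
  refine dotProduct_star_self_eq_zero.mp ?_
  rw [star_mulVec, hA.posSemidef_sqrt.1.eq, ← dotProduct_mulVec, mulVec_mulVec,
    hA.sqrt_mul_self, hv, dotProduct_zero]

theorem conjTranspose_mul_self_unitary_mul_sqrt (hA : A.PosSemidef) {U : Matrix m m 𝕜}
    (hU : U ∈ unitaryGroup m 𝕜) : (U * hA.sqrt)ᴴ * (U * hA.sqrt) = A := by
  have hUU : Uᴴ * U = 1 := hU.1
  calc (U * hA.sqrt)ᴴ * (U * hA.sqrt) = hA.sqrtᴴ * (Uᴴ * U) * hA.sqrt := by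
        simp only [conjTranspose_mul, Matrix.mul_assoc]
    _ = A := by rw [hUU, Matrix.mul_one, hA.posSemidef_sqrt.1.eq, hA.sqrt_mul_self]

end PosSemidef

theorem span_range_conjTranspose_mulVec_eq_top {ι : Type*} (M : ι → Matrix m m 𝕜) (v : m → 𝕜)
    (hfix : ∀ i, ∃ z : 𝕜, M i *ᵥ v = z • v)
    (hspan : Submodule.span 𝕜 (Set.range fun i => ((M i)ᴴ * M i) *ᵥ v) = ⊤) :
    Submodule.span 𝕜 (Set.range fun i => (M i)ᴴ *ᵥ v) = ⊤ := by
  refine top_le_iff.mp (hspan ▸ Submodule.span_le.mpr ?_)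
  rintro _ ⟨i, rfl⟩
  obtain ⟨z, hz⟩ := hfix i
  have hMMv : ((M i)ᴴ * M i) *ᵥ v = z • ((M i)ᴴ *ᵥ v) := by
    rw [← mulVec_mulVec, hz, mulVec_smul]
  simp only [SetLike.mem_coe, hMMv]
  exact Submodule.smul_mem _ z (Submodule.subset_span ⟨i, rfl⟩)

end Matrix

theorem kraus_from_povm_general {d n : ℕ}
    (E : Fin n → Matrix (Fin d) (Fin d) ℂ)
    (hE : ∀ i, (E i).PosSemidef) (hEsum : ∑ i, E i = 1)
    (T : Fin d → ℂ)
    (hEspan : Submodule.span ℂ (Set.range fun i => E i *ᵥ T) = ⊤)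
    (U : Fin n → Matrix (Fin d) (Fin d) ℂ)
    (hU : ∀ i, U i ∈ Matrix.unitaryGroup (Fin d) ℂ)
    (hUT : ∀ i, E i *ᵥ T ≠ 0 → ∃ c : ℂ, (U i * (hE i).sqrt) *ᵥ T = c • T) :
    (∑ i, (U i * (hE i).sqrt)ᴴ * (U i * (hE i).sqrt) = 1) ∧
    (∀ i, ∃ zi : ℂ, (U i * (hE i).sqrt) *ᵥ T = zi • T) ∧
    Submodule.span ℂ (Set.range fun i => (U i * (hE i).sqrt)ᴴ *ᵥ T) = ⊤ := by
  have hMM : ∀ i, (U i * (hE i).sqrt)ᴴ * (U i * (hE i).sqrt) = E i := fun i =>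
    (hE i).conjTranspose_mul_self_unitary_mul_sqrt (hU i)
  have hfix : ∀ i, ∃ zi : ℂ, (U i * (hE i).sqrt) *ᵥ T = zi • T := by
    intro i
    by_cases hET : E i *ᵥ T = 0
    · refine ⟨0, ?_⟩
      rw [← mulVec_mulVec, (hE i).sqrt_mulVec_eq_zero hET, mulVec_zero, zero_smul]
    · exact hUT i hET
  refine ⟨by simp only [hMM, hEsum], hfix, ?_⟩
  exact span_range_conjTranspose_mulVec_eq_top _ T hfix (by simp only [hMM, hEspan])

/-- **Construction of control channels from a POVM.** Given a POVM `{E i}` (positive semidefinite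
operators summing to the identity) whose elements satisfy `Span {E i *ᵥ T} = ⊤` for a unit vector
`T`, and unitaries `U i` such that `U i * √(E i) *ᵥ T` is proportional to `T` whenever
`E i *ᵥ T ≠ 0`, the operators `M i = U i * √(E i)` form a set of Kraus operators satisfying the
fixed-point condition with respect to `T`, and the vectors `(M i)ᴴ *ᵥ T` span the whole space. -/
theorem kraus_from_povm {d n : ℕ}
    (E : Fin n → Matrix (Fin d) (Fin d) ℂ)
    (hE : ∀ i, (E i).PosSemidef) (hEsum : ∑ i, E i = 1)
    (T : Fin d → ℂ) (hT : star T ⬝ᵥ T = 1)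
    (hEspan : Submodule.span ℂ (Set.range fun i => E i *ᵥ T) = ⊤)
    (U : Fin n → Matrix (Fin d) (Fin d) ℂ)
    (hU : ∀ i, U i ∈ Matrix.unitaryGroup (Fin d) ℂ)
    (hUT : ∀ i, E i *ᵥ T ≠ 0 → ∃ c : ℂ, (U i * (hE i).sqrt) *ᵥ T = c • T) :
    (∑ i, (U i * (hE i).sqrt)ᴴ * (U i * (hE i).sqrt) = 1) ∧
    (∀ i, ∃ zi : ℂ, (U i * (hE i).sqrt) *ᵥ T = zi • T) ∧
    Submodule.span ℂ (Set.range fun i => (U i * (hE i).sqrt)ᴴ *ᵥ T) = ⊤ :=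
  kraus_from_povm_general E hE hEsum T hEspan U hU hUT
end

section
/- Let H = ℂ² with orthonormal basis {|0⟩, |1⟩}, target state |T⟩ = (|0⟩+|1⟩)/√2, and for β ∈ ℝ define M_0 = e^{−iσ_y(β−π/4)} (sin β |0⟩⟨0| + cos β |1⟩⟨1|) and M_1 = e^{+iσ_y(β−π/4)} (cos β |0⟩⟨0| + sin β |1⟩⟨1|), where σ_y = i|1⟩⟨0| − i|0⟩⟨1|. Then M_0† M_0 + M_1† M_1 = I, and there exist complex numbers z_0, z_1 with M_0|T⟩ = z_0|T⟩ and M_1|T⟩ = z_1|T⟩. -/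
/-!
Since `σ_y² = 1`, the exponential `e^{iθσ_y} = cos θ + i sin θ σ_y` is the real rotation matrix
`R θ = [[cos θ, sin θ], [-sin θ, cos θ]]`, so `M₀ = R(π/4 - β) diag(sin β, cos β)` and
`M₁ = R(β - π/4) diag(cos β, sin β)`. Rotations are unitary, hence `M₀ᴴM₀ + M₁ᴴM₁` is the diagonal
matrix `diag(sin² β + cos² β, cos² β + sin² β) = 1`. On `|0⟩ + |1⟩` the diagonal factors produce
`(sin β, cos β)` and `(cos β, sin β)`, which the rotations turn into `(sin π/4, cos π/4)` and
`(cos π/4, sin π/4)`, both multiples of `|0⟩ + |1⟩`.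
-/

open Matrix Complex NormedSpace

theorem exp_smul_of_mul_self_eq_one {A : Type*} [Ring A] [Algebra ℂ A] [TopologicalSpace A]
    [IsTopologicalRing A] [ContinuousSMul ℂ A] [T2Space A] {a : A} (ha : a * a = 1) (z : ℂ) :
    exp (z • a) = cosh z • (1 : A) + sinh z • a := by
  have hpow : ∀ n, a ^ (2 * n) = 1 := fun n => by rw [pow_mul, sq, ha, one_pow]
  rw [exp_eq_tsum ℂ]
  refine HasSum.tsum_eq (HasSum.even_add_odd ?_ ?_)
  · convert (hasSum_cosh z).smul_const (1 : A) using 2 with n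
    rw [smul_pow, hpow, smul_smul, div_eq_inv_mul]
  · convert (hasSum_sinh z).smul_const a using 2 with n
    rw [smul_pow, pow_succ a, hpow, one_mul, smul_smul, div_eq_inv_mul]

theorem smul_add_smul_eq_diagonal {R : Type*} [Semiring R] (a b : R) :
    a • !![1, 0; 0, 0] + b • !![0, 0; 0, 1] = diagonal ![a, b] := by
  ext i j
  fin_cases i <;> fin_cases j <;> simp

theorem diagonal_mulVec_one_one {R : Type*} [Semiring R] (a b : R) :
    diagonal ![a, b] *ᵥ ![1, 1] = ![a, b] := by
  ext i
  fin_cases i <;> simp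

theorem smul_one_one {R : Type*} [MulOneClass R] (a : R) : a • ![1, 1] = ![a, a] := by
  simp

noncomputable def rotationMatrix (θ : ℝ) : Matrix (Fin 2) (Fin 2) ℂ :=
  !![(Real.cos θ : ℂ), Real.sin θ; -Real.sin θ, Real.cos θ]

theorem exp_I_mul_smul_pauliY (θ : ℝ) :
    exp ((I * θ) • !![0, -I; I, 0]) = rotationMatrix θ := by
  have hY : !![0, -I; I, 0] * !![0, -I; I, 0] = (1 : Matrix (Fin 2) (Fin 2) ℂ) := by
    ext i j
    fin_cases i <;> fin_cases j <;> simp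
  rw [exp_smul_of_mul_self_eq_one hY, mul_comm, cosh_mul_I, sinh_mul_I, rotationMatrix]
  ext i j
  fin_cases i <;> fin_cases j <;> simp [mul_comm, ← mul_assoc]

theorem rotationMatrix_conjTranspose_mul_self (θ : ℝ) :
    (rotationMatrix θ)ᴴ * rotationMatrix θ = 1 := by
  ext i j
  fin_cases i <;> fin_cases j <;>
    simp [rotationMatrix, mul_apply, ← cos_conj, ← sin_conj, mul_comm, ← sq]

theorem conjTranspose_mul_self_rotationMatrix_mul_diagonal (θ a b : ℝ) :
    (rotationMatrix θ * diagonal ![(a : ℂ), b])ᴴ * (rotationMatrix θ * diagonal ![(a : ℂ), b]) =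
      diagonal ![(a : ℂ) ^ 2, (b : ℂ) ^ 2] := by
  rw [conjTranspose_mul, mul_assoc, ← mul_assoc (rotationMatrix θ)ᴴ,
    rotationMatrix_conjTranspose_mul_self, one_mul, diagonal_conjTranspose, diagonal_mul_diagonal]
  congr 1
  ext i
  fin_cases i <;> simp [sq]

theorem rotationMatrix_mulVec_sin_cos (φ β : ℝ) :
    rotationMatrix φ *ᵥ ![(Real.sin β : ℂ), Real.cos β] =
      ![(Real.sin (β + φ) : ℂ), Real.cos (β + φ)] := by
  ext i
  fin_cases i <;> simp [rotationMatrix, Real.sin_add, Real.cos_add]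
  ring

theorem rotationMatrix_mulVec_cos_sin (φ β : ℝ) :
    rotationMatrix φ *ᵥ ![(Real.cos β : ℂ), Real.sin β] =
      ![(Real.cos (β - φ) : ℂ), Real.sin (β - φ)] := by
  ext i
  fin_cases i <;> simp [rotationMatrix, Real.sin_sub, Real.cos_sub]
  ring

/-- **Example 1 (fixed-point property).** For the qubit target `|T⟩ = (|0⟩+|1⟩)/√2` and any
`β ∈ ℝ`, the operators `M₀ = e^{−iσ_y(β−π/4)}(sin β |0⟩⟨0| + cos β |1⟩⟨1|)` and
`M₁ = e^{+iσ_y(β−π/4)}(cos β |0⟩⟨0| + sin β |1⟩⟨1|)` satisfy the completeness relation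
`M₀ᴴM₀ + M₁ᴴM₁ = 1` and the fixed-point condition `Mᵢ|T⟩ = zᵢ|T⟩`. -/
theorem example1_kraus_fixed_point (β : ℝ) :
    let σy : Matrix (Fin 2) (Fin 2) ℂ := !![0, -Complex.I; Complex.I, 0]
    let P0 : Matrix (Fin 2) (Fin 2) ℂ := !![1, 0; 0, 0]
    let P1 : Matrix (Fin 2) (Fin 2) ℂ := !![0, 0; 0, 1]
    let M0 : Matrix (Fin 2) (Fin 2) ℂ :=
      exp ((-Complex.I * (((β : ℂ)) - (Real.pi : ℂ) / 4)) • σy) *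
        ((Real.sin β : ℂ) • P0 + (Real.cos β : ℂ) • P1)
    let M1 : Matrix (Fin 2) (Fin 2) ℂ :=
      exp ((Complex.I * (((β : ℂ)) - (Real.pi : ℂ) / 4)) • σy) *
        ((Real.cos β : ℂ) • P0 + (Real.sin β : ℂ) • P1)
    let T : Fin 2 → ℂ := ((Real.sqrt 2 : ℂ))⁻¹ • ![1, 1]
    (M0ᴴ * M0 + M1ᴴ * M1 = 1) ∧
    (∃ z0 : ℂ, M0 *ᵥ T = z0 • T) ∧ (∃ z1 : ℂ, M1 *ᵥ T = z1 • T) := by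
  intro σy P0 P1 M0 M1 T
  have hM0 :
      M0 = rotationMatrix (Real.pi / 4 - β) * diagonal ![(Real.sin β : ℂ), Real.cos β] := by
    simp only [M0, σy, P0, P1]
    rw [show -I * ((β : ℂ) - Real.pi / 4) = I * ((Real.pi / 4 - β : ℝ) : ℂ) by push_cast; ring,
      exp_I_mul_smul_pauliY, smul_add_smul_eq_diagonal]
  have hM1 :
      M1 = rotationMatrix (β - Real.pi / 4) * diagonal ![(Real.cos β : ℂ), Real.sin β] := by
    simp only [M1, σy, P0, P1]
    rw [show I * ((β : ℂ) - Real.pi / 4) = I * ((β - Real.pi / 4 : ℝ) : ℂ) by push_cast; ring,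
      exp_I_mul_smul_pauliY, smul_add_smul_eq_diagonal]
  refine ⟨?_, ⟨Real.sin (Real.pi / 4), ?_⟩, ⟨Real.cos (Real.pi / 4), ?_⟩⟩
  · rw [hM0, hM1, conjTranspose_mul_self_rotationMatrix_mul_diagonal,
      conjTranspose_mul_self_rotationMatrix_mul_diagonal, diagonal_add, ← diagonal_one]
    congr 1
    ext i
    fin_cases i <;> simp [add_comm]
  · rw [hM0, mulVec_smul, ← mulVec_mulVec, diagonal_mulVec_one_one,
      rotationMatrix_mulVec_sin_cos, add_sub_cancel, Real.cos_pi_div_four, ← Real.sin_pi_div_four,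
      ← smul_one_one, smul_comm]
  · rw [hM1, mulVec_smul, ← mulVec_mulVec, diagonal_mulVec_one_one,
      rotationMatrix_mulVec_cos_sin, sub_sub_cancel, Real.sin_pi_div_four, ← Real.cos_pi_div_four,
      ← smul_one_one, smul_comm]
end

section
/- Let the system and controller each be a qubit (Hilbert space ℂ²), let U = exp(−(iλ/2)(σ_y⊗σ_y + σ_z⊗σ_z)) on ℂ²⊗ℂ² with λ ∈ ℝ, let the controller be initialized in |0_x⟩_c = (|0⟩_c + i|1⟩_c)/√2 (with (|0⟩_c,|1⟩_c) the eigenbasis of σ_y on the controller), and let |T⟩ = (|0⟩+|1⟩)/√2 be the system target. Define the channel $(ρ) = Tr_c[U (ρ ⊗ |0_x⟩_c⟨0_x|) U†]. Then for every density operator ρ on ℂ² and every n ∈ ℕ, the target fidelity satisfies F($^n(ρ), T) = 1 − (1 − F(ρ, T)) (1 − sin²λ)^n. -/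
/-!
The Hamiltonian `σ_y ⊗ σ_y + σ_z ⊗ σ_z` is diagonal in the Bell basis, with eigenvalues
`0, 0, -2, 2`, so `U` is an explicit matrix with entries in `(1 ± e^{±iλ}) / 2`. The controller
state is `|+⟩` up to the global phase `e^{iπ/4}`. Computing the partial trace, the channel
preserves the trace and multiplies the `|−⟩`-population `tr ρ - F(ρ, T)` by
`((e^{iλ} + e^{-iλ}) / 2)² = cos² λ = 1 - sin² λ`; iterating gives the formula.
-/

open Matrix Complex ComplexOrder NormedSpace Kronecker

/-- Partial trace over the controller (second) tensor factor of an operator on `ℂ² ⊗ ℂ²`. -/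
noncomputable def ptraceControl {d : ℕ} (A : Matrix (Fin d × Fin d) (Fin d × Fin d) ℂ) :
    Matrix (Fin d) (Fin d) ℂ :=
  Matrix.of fun i j => ∑ k, A (i, k) (j, k)

theorem iterate_eq_sub_mul_pow {α R : Type*} [CommRing R] (f : α → α) (tr F : α → R) (c : R)
    (htr : ∀ σ, tr (f σ) = tr σ) (hF : ∀ σ, F (f σ) = tr σ - (tr σ - F σ) * c) (σ : α) (n : ℕ) :
    F (f^[n] σ) = tr σ - (tr σ - F σ) * c ^ n := by
  have htrn : ∀ n, tr (f^[n] σ) = tr σ := fun n => by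
    induction n with
    | zero => rfl
    | succ n ih => rw [Function.iterate_succ_apply', htr, ih]
  induction n with
  | zero => simp
  | succ n ih => rw [Function.iterate_succ_apply', hF, htrn, ih]; ring

/-- Columns are the (unnormalised) Bell vectors `|00⟩+|11⟩, |01⟩+|10⟩, |01⟩-|10⟩, |00⟩-|11⟩`. -/
def bellBasis : Matrix (Fin 2 × Fin 2) (Fin 2 × Fin 2) ℂ :=
  of fun p q => if q = p then (if p.1 = 0 then 1 else -1)
    else if q = (p.1 + 1, p.2 + 1) then 1 else 0

theorem bellBasis_mul_half_bellBasis : bellBasis * ((2 : ℂ)⁻¹ • bellBasis) = 1 := by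
  ext ⟨i, k⟩ ⟨j, m⟩
  fin_cases i <;> fin_cases k <;> fin_cases j <;> fin_cases m <;>
    simp [bellBasis, mul_apply, Fintype.sum_prod_type, one_apply, Prod.ext_iff] <;> norm_num

theorem inv_bellBasis : bellBasis⁻¹ = (2 : ℂ)⁻¹ • bellBasis :=
  inv_eq_right_inv bellBasis_mul_half_bellBasis

theorem isUnit_bellBasis : IsUnit bellBasis :=
  (isUnit_iff_isUnit_det _).2 (isUnit_det_of_right_inverse bellBasis_mul_half_bellBasis)

def bellEigenvalues (p : Fin 2 × Fin 2) : ℂ := ![![0, 0], ![-2, 2]] p.1 p.2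

theorem pauli_coupling_eq_bellBasis_conj :
    (!![0, -I; I, 0] : Matrix (Fin 2) (Fin 2) ℂ) ⊗ₖ !![0, -I; I, 0] +
        (!![1, 0; 0, -1] : Matrix (Fin 2) (Fin 2) ℂ) ⊗ₖ !![1, 0; 0, -1] =
      bellBasis * diagonal bellEigenvalues * bellBasis⁻¹ := by
  rw [inv_bellBasis]
  ext ⟨i, k⟩ ⟨j, m⟩
  fin_cases i <;> fin_cases k <;> fin_cases j <;> fin_cases m <;>
    simp [bellBasis, bellEigenvalues, mul_apply, Fintype.sum_prod_type, Prod.ext_iff]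

noncomputable def couplingUnitary (z : ℂ) : Matrix (Fin 2 × Fin 2) (Fin 2 × Fin 2) ℂ :=
  of fun p q =>
    let w := if p.1 = p.2 then z⁻¹ else z
    if q = p then (1 + w) / 2 else if q = (p.1 + 1, p.2 + 1) then (1 - w) / 2 else 0

theorem exp_pauli_coupling (l : ℝ) :
    NormedSpace.exp ((-I * l / 2) •
        ((!![0, -I; I, 0] : Matrix (Fin 2) (Fin 2) ℂ) ⊗ₖ !![0, -I; I, 0] +
          (!![1, 0; 0, -1] : Matrix (Fin 2) (Fin 2) ℂ) ⊗ₖ !![1, 0; 0, -1])) =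
      couplingUnitary (cexp (l * I)) := by
  have hphases : NormedSpace.exp ((-I * l / 2) • bellEigenvalues) =
      fun p => ![![1, 1], ![cexp (l * I), (cexp (l * I))⁻¹]] p.1 p.2 := by
    funext ⟨i, k⟩
    rw [Pi.coe_exp, ← Complex.exp_eq_exp_ℂ, ← Complex.exp_neg]
    fin_cases i <;> fin_cases k <;> simp [bellEigenvalues] <;> ring_nf
  rw [pauli_coupling_eq_bellBasis_conj, ← Matrix.smul_mul, ← Matrix.mul_smul, ← diagonal_smul,
    exp_conj _ _ isUnit_bellBasis, exp_diagonal, hphases, inv_bellBasis]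
  ext ⟨i, k⟩ ⟨j, m⟩
  fin_cases i <;> fin_cases k <;> fin_cases j <;> fin_cases m <;>
    simp [bellBasis, couplingUnitary, mul_apply, Fintype.sum_prod_type, Prod.ext_iff] <;> ring

noncomputable def couplingChannel (z : ℂ) (σ : Matrix (Fin 2) (Fin 2) ℂ) :
    Matrix (Fin 2) (Fin 2) ℂ :=
  ptraceControl (couplingUnitary z * (σ ⊗ₖ of fun _ _ => (2 : ℂ)⁻¹) * (couplingUnitary z)ᴴ)

theorem trace_couplingChannel {z : ℂ} (hz : ‖z‖ = 1) (σ : Matrix (Fin 2) (Fin 2) ℂ) :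
    (couplingChannel z σ).trace = σ.trace := by
  have hz0 : z ≠ 0 := norm_ne_zero_iff.1 (hz ▸ one_ne_zero)
  have hconj : starRingEnd ℂ z = z⁻¹ := (RCLike.inv_eq_conj hz).symm
  simp only [couplingChannel, ptraceControl, couplingUnitary, trace, diag_apply, mul_apply,
    of_apply, kroneckerMap_apply, conjTranspose_apply, RCLike.star_def, Fintype.sum_prod_type,
    Fin.sum_univ_two, Prod.ext_iff, Fin.isValue, Fin.reduceAdd, zero_ne_one, one_ne_zero,
    and_true, and_false, ↓reduceIte, ite_mul, zero_mul, mul_zero, zero_add, add_zero,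
    map_div₀, map_add, map_sub, map_one, map_zero, map_ofNat, map_inv₀, hconj, inv_inv]
  field_simp
  ring

theorem couplingChannel_fidelity {z : ℂ} (hz : ‖z‖ = 1) (σ : Matrix (Fin 2) (Fin 2) ℂ) :
    let F : Matrix (Fin 2) (Fin 2) ℂ → ℂ := fun M => (M 0 0 + M 0 1 + M 1 0 + M 1 1) / 2
    F (couplingChannel z σ) = σ.trace - (σ.trace - F σ) * ((z + z⁻¹) / 2) ^ 2 := by
  have hz0 : z ≠ 0 := norm_ne_zero_iff.1 (hz ▸ one_ne_zero)
  have hconj : starRingEnd ℂ z = z⁻¹ := (RCLike.inv_eq_conj hz).symm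
  simp only [couplingChannel, ptraceControl, couplingUnitary, trace, diag_apply, mul_apply,
    of_apply, kroneckerMap_apply, conjTranspose_apply, RCLike.star_def, Fintype.sum_prod_type,
    Fin.sum_univ_two, Prod.ext_iff, Fin.isValue, Fin.reduceAdd, zero_ne_one, one_ne_zero,
    and_true, and_false, ↓reduceIte, ite_mul, zero_mul, mul_zero, zero_add, add_zero,
    map_div₀, map_add, map_sub, map_one, map_zero, map_ofNat, map_inv₀, hconj, inv_inv]
  field_simp
  ring

theorem inv_sqrt_two_mul_inv_sqrt_two :
    ((Real.sqrt 2 : ℂ))⁻¹ * ((Real.sqrt 2 : ℂ))⁻¹ = 2⁻¹ := by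
  rw [← mul_inv, ← ofReal_mul, Real.mul_self_sqrt zero_le_two, ofReal_ofNat]

theorem vecMulVec_controller_state :
    let ψc : Fin 2 → ℂ := ((Real.sqrt 2 : ℂ))⁻¹ •
      (((Real.sqrt 2 : ℂ))⁻¹ • ![1, I] + I • (((Real.sqrt 2 : ℂ))⁻¹ • ![1, -I]))
    vecMulVec ψc (star ψc) = of fun _ _ => (2 : ℂ)⁻¹ := by
  have h2 := inv_sqrt_two_mul_inv_sqrt_two
  ext i j
  fin_cases i <;> fin_cases j <;>
    simp only [Nat.succ_eq_add_one, Nat.reduceAdd, Fin.zero_eta, Fin.mk_one, smul_cons,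
      smul_eq_mul, mul_one, mul_neg, smul_empty, add_cons, head_cons, tail_cons, empty_add_empty,
      Fin.isValue, vecMulVec_apply, cons_val_zero, cons_val_one,
      cons_val_fin_one, Pi.star_apply, star_mul', star_inv₀, star_add, star_neg, RCLike.star_def,
      conj_ofReal, conj_I, neg_mul, neg_neg, of_apply] <;>
    grind [I_sq]

theorem dotProduct_mulVec_ketPlus (M : Matrix (Fin 2) (Fin 2) ℂ) :
    let T : Fin 2 → ℂ := ((Real.sqrt 2 : ℂ))⁻¹ • ![1, 1]
    star T ⬝ᵥ (M *ᵥ T) = (M 0 0 + M 0 1 + M 1 0 + M 1 1) / 2 := by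
  have h2 := inv_sqrt_two_mul_inv_sqrt_two
  simp only [dotProduct, mulVec, smul_cons, smul_eq_mul, mul_one, smul_empty, Pi.star_apply,
    Pi.smul_apply, RCLike.star_def, Fin.sum_univ_two, Fin.isValue, cons_val_zero, cons_val_one,
    cons_val_fin_one, map_inv₀, conj_ofReal]
  linear_combination (M 0 0 + M 0 1 + M 1 0 + M 1 1) * h2

theorem exp_mul_I_add_inv_div_two_sq (θ : ℝ) :
    ((cexp (θ * I) + (cexp (θ * I))⁻¹) / 2) ^ 2 = ((1 - Real.sin θ ^ 2 : ℝ) : ℂ) := by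
  rw [← Real.cos_sq', ofReal_pow, ofReal_cos, Complex.cos, neg_mul, Complex.exp_neg]

theorem example1_fidelity_formula_general (l : ℝ)
    (ρ : Matrix (Fin 2) (Fin 2) ℂ) (hρtr : ρ.trace = 1) :
    let σy : Matrix (Fin 2) (Fin 2) ℂ := !![0, -Complex.I; Complex.I, 0]
    let σz : Matrix (Fin 2) (Fin 2) ℂ := !![1, 0; 0, -1]
    let U : Matrix (Fin 2 × Fin 2) (Fin 2 × Fin 2) ℂ :=
      NormedSpace.exp ((-Complex.I * (l : ℂ) / 2) • (σy ⊗ₖ σy + σz ⊗ₖ σz))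
    let vplus : Fin 2 → ℂ := ((Real.sqrt 2 : ℂ))⁻¹ • ![1, Complex.I]
    let vminus : Fin 2 → ℂ := ((Real.sqrt 2 : ℂ))⁻¹ • ![1, -Complex.I]
    let ψc : Fin 2 → ℂ := ((Real.sqrt 2 : ℂ))⁻¹ • (vplus + Complex.I • vminus)
    let T : Fin 2 → ℂ := ((Real.sqrt 2 : ℂ))⁻¹ • ![1, 1]
    let chan : Matrix (Fin 2) (Fin 2) ℂ → Matrix (Fin 2) (Fin 2) ℂ :=
      fun σ => ptraceControl (U * (σ ⊗ₖ vecMulVec ψc (star ψc)) * Uᴴ)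
    ∀ n : ℕ, star T ⬝ᵥ (chan^[n] ρ *ᵥ T) =
      1 - (1 - star T ⬝ᵥ (ρ *ᵥ T)) * (((1 - Real.sin l ^ 2 : ℝ) : ℂ)) ^ n := by
  intro σy σz U vplus vminus ψc T chan n
  have hU : U = couplingUnitary (cexp (l * I)) := exp_pauli_coupling l
  have hψc : vecMulVec ψc (star ψc) = of fun _ _ => (2 : ℂ)⁻¹ := vecMulVec_controller_state
  have hchan : chan = couplingChannel (cexp (l * I)) := by
    funext σ
    simp only [chan, hU, hψc, couplingChannel]
  have hT : ∀ M, star T ⬝ᵥ (M *ᵥ T) = (M 0 0 + M 0 1 + M 1 0 + M 1 1) / 2 :=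
    dotProduct_mulVec_ketPlus
  have hnorm : ‖cexp (l * I)‖ = 1 := norm_exp_ofReal_mul_I l
  have hF := iterate_eq_sub_mul_pow (couplingChannel (cexp (l * I))) trace
    (fun M => star T ⬝ᵥ (M *ᵥ T)) _ (trace_couplingChannel hnorm)
    (fun σ => by simpa only [hT] using couplingChannel_fidelity hnorm σ) ρ n
  rw [hchan, hF, hρtr, exp_mul_I_add_inv_div_two_sq]

/-- **Example 1 (exponential fidelity gain).** For the coupling unitary
`U = exp(−(iλ/2)(σ_y⊗σ_y + σ_z⊗σ_z))`, a controller initialised in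
`|0_x⟩_c = (|0⟩_c + i|1⟩_c)/√2`, where `(|0⟩_c, |1⟩_c)` is the eigenbasis of `σ_y`
(eigenvectors `v₊ = (1, i)/√2`, `v₋ = (1, −i)/√2` in the computational basis), and the
target `|T⟩ = (|0⟩+|1⟩)/√2`, the channel `$(ρ) = Tr_c[U (ρ ⊗ |0_x⟩⟨0_x|) Uᴴ]` satisfies
`F($ⁿ(ρ), T) = 1 − (1 − F(ρ, T))(1 − sin²λ)ⁿ` for every density operator `ρ` and every `n`. -/
theorem example1_fidelity_formula (l : ℝ)
    (ρ : Matrix (Fin 2) (Fin 2) ℂ) (hρ : ρ.PosSemidef) (hρtr : ρ.trace = 1) :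
    let σy : Matrix (Fin 2) (Fin 2) ℂ := !![0, -Complex.I; Complex.I, 0]
    let σz : Matrix (Fin 2) (Fin 2) ℂ := !![1, 0; 0, -1]
    let U : Matrix (Fin 2 × Fin 2) (Fin 2 × Fin 2) ℂ :=
      NormedSpace.exp ((-Complex.I * (l : ℂ) / 2) • (σy ⊗ₖ σy + σz ⊗ₖ σz))
    let vplus : Fin 2 → ℂ := ((Real.sqrt 2 : ℂ))⁻¹ • ![1, Complex.I]
    let vminus : Fin 2 → ℂ := ((Real.sqrt 2 : ℂ))⁻¹ • ![1, -Complex.I]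
    let ψc : Fin 2 → ℂ := ((Real.sqrt 2 : ℂ))⁻¹ • (vplus + Complex.I • vminus)
    let T : Fin 2 → ℂ := ((Real.sqrt 2 : ℂ))⁻¹ • ![1, 1]
    let chan : Matrix (Fin 2) (Fin 2) ℂ → Matrix (Fin 2) (Fin 2) ℂ :=
      fun σ => ptraceControl (U * (σ ⊗ₖ vecMulVec ψc (star ψc)) * Uᴴ)
    ∀ n : ℕ, star T ⬝ᵥ (chan^[n] ρ *ᵥ T) =
      1 - (1 - star T ⬝ᵥ (ρ *ᵥ T)) * (((1 - Real.sin l ^ 2 : ℝ) : ℂ)) ^ n :=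
  example1_fidelity_formula_general l ρ hρtr
end

section
/- Let S be the swap operator on ℂ^d ⊗ ℂ^d, let λ ∈ ℝ, let U = exp(−iλS), and let the controller be initialized in the target state |T⟩_c where |T⟩ ∈ ℂ^d is a unit vector. Then the channel $(ρ) = Tr_c[U (ρ ⊗ |T⟩_c⟨T|) U†] acts on density operators ρ on ℂ^d as $(ρ) = cos²λ · ρ + sin²λ · |T⟩⟨T| + i sin λ cos λ · (ρ|T⟩⟨T| − |T⟩⟨T|ρ). -/
open Matrix Complex ComplexOrder NormedSpace Kronecker

/-!
Since `S * S = 1`, the exponential series collapses to `exp (-iλS) = cos λ - i sin λ • S`.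
Conjugating `ρ ⊗ P` (with `P = |T⟩⟨T|`) by `a + b S` produces four terms, and tracing out the
controller turns them into `tr P • ρ`, `ρ * P`, `P * ρ` and `tr ρ • P`, because a swap on one
side of a Kronecker product makes the partial trace multiply the two factors.
-/

/-- The swap operator on `ℂ^d ⊗ ℂ^d`: `S (i,j) (k,l) = δ_{i,l} δ_{j,k}`, i.e.
`S = ∑_{i,j} |i⟩⟨j| ⊗ |j⟩⟨i|`. -/
def swapOp (d : ℕ) : Matrix (Fin d × Fin d) (Fin d × Fin d) ℂ :=
  Matrix.of fun p q => if p.1 = q.2 ∧ p.2 = q.1 then 1 else 0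

theorem NormedSpace.exp_mul_I_smul_of_mul_self_eq_one {𝔸 : Type*} [Ring 𝔸] [Algebra ℂ 𝔸]
    [TopologicalSpace 𝔸] [IsTopologicalRing 𝔸] [ContinuousSMul ℂ 𝔸] [T2Space 𝔸]
    {s : 𝔸} (hs : s * s = 1) (z : ℂ) :
    exp ((z * I) • s) = Complex.cos z • (1 : 𝔸) + (I * Complex.sin z) • s := by
  have hs2 : s ^ 2 = 1 := by rw [sq, hs]
  rw [exp_eq_tsum ℂ]
  -- even powers of `s` are `1`, odd ones are `s`: split the series into the cosine and sine series
  refine HasSum.tsum_eq (HasSum.even_add_odd ?_ ?_)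
  · have h := (Complex.hasSum_cos' z).smul_const (1 : 𝔸)
    convert h using 2 with k
    rw [smul_pow, pow_mul s, hs2, one_pow, smul_smul, div_eq_inv_mul]
  · have h := ((Complex.hasSum_sin' z).mul_left I).smul_const s
    convert h using 2 with k
    rw [smul_pow, pow_succ s, pow_mul s, hs2, one_pow, one_mul, smul_smul]
    congr 1
    field_simp [I_ne_zero]

section Swap

variable {d : ℕ}

theorem swapOp_mul_apply (M : Matrix (Fin d × Fin d) (Fin d × Fin d) ℂ)
    (i j : Fin d) (q : Fin d × Fin d) :
    (swapOp d * M) (i, j) q = M (j, i) q := by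
  simp [swapOp, mul_apply, Fintype.sum_prod_type, ite_and]

theorem mul_swapOp_apply (M : Matrix (Fin d × Fin d) (Fin d × Fin d) ℂ)
    (p : Fin d × Fin d) (k l : Fin d) :
    (M * swapOp d) p (k, l) = M p (l, k) := by
  simp [swapOp, mul_apply, Fintype.sum_prod_type, ite_and]

variable (d) in
theorem swapOp_mul_swapOp : swapOp d * swapOp d = 1 := by
  ext ⟨i, j⟩ ⟨k, l⟩
  rw [swapOp_mul_apply]
  simp [swapOp, one_apply, Prod.ext_iff, and_comm]

variable (d) in
theorem conjTranspose_swapOp : (swapOp d)ᴴ = swapOp d := by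
  ext ⟨i, j⟩ ⟨k, l⟩
  simp only [swapOp, conjTranspose_apply, of_apply]
  split_ifs <;> simp_all

theorem ptraceControl_add (A B : Matrix (Fin d × Fin d) (Fin d × Fin d) ℂ) :
    ptraceControl (A + B) = ptraceControl A + ptraceControl B := by
  ext i j
  simp [ptraceControl, Finset.sum_add_distrib]

theorem ptraceControl_smul (c : ℂ) (A : Matrix (Fin d × Fin d) (Fin d × Fin d) ℂ) :
    ptraceControl (c • A) = c • ptraceControl A := by
  ext i j
  simp [ptraceControl, Finset.mul_sum]

theorem ptraceControl_kronecker (A B : Matrix (Fin d) (Fin d) ℂ) :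
    ptraceControl (A ⊗ₖ B) = B.trace • A := by
  ext i j
  simp [ptraceControl, trace, Finset.mul_sum, mul_comm]

theorem ptraceControl_kronecker_mul_swapOp (A B : Matrix (Fin d) (Fin d) ℂ) :
    ptraceControl ((A ⊗ₖ B) * swapOp d) = A * B := by
  ext i j
  simp only [ptraceControl, of_apply, mul_swapOp_apply]
  simp [mul_apply]

theorem ptraceControl_swapOp_mul_kronecker (A B : Matrix (Fin d) (Fin d) ℂ) :
    ptraceControl (swapOp d * (A ⊗ₖ B)) = B * A := by
  ext i j
  simp only [ptraceControl, of_apply, swapOp_mul_apply]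
  simp [mul_apply, mul_comm]

theorem ptraceControl_swapOp_mul_kronecker_mul_swapOp (A B : Matrix (Fin d) (Fin d) ℂ) :
    ptraceControl (swapOp d * (A ⊗ₖ B) * swapOp d) = A.trace • B := by
  ext i j
  simp only [ptraceControl, of_apply, mul_swapOp_apply, swapOp_mul_apply]
  simp [trace, Finset.sum_mul]

theorem ptraceControl_conj_kronecker (a b : ℂ) (A B : Matrix (Fin d) (Fin d) ℂ) :
    ptraceControl ((a • 1 + b • swapOp d) * (A ⊗ₖ B) * (a • 1 + b • swapOp d)ᴴ) =
      (a * star a * B.trace) • A + (a * star b) • (A * B) + (b * star a) • (B * A) +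
        (b * star b * A.trace) • B := by
  simp only [conjTranspose_add, conjTranspose_smul, conjTranspose_one, conjTranspose_swapOp,
    add_mul, mul_add, smul_mul_assoc, mul_smul_comm, one_mul, mul_one, smul_smul,
    ptraceControl_add, ptraceControl_smul, ptraceControl_kronecker,
    ptraceControl_kronecker_mul_swapOp, ptraceControl_swapOp_mul_kronecker,
    ptraceControl_swapOp_mul_kronecker_mul_swapOp]
  module

end Swap

theorem weak_swap_channel_action_general {d : ℕ} (l : ℝ)
    (T : Fin d → ℂ) (hT : star T ⬝ᵥ T = 1)
    (ρ : Matrix (Fin d) (Fin d) ℂ) (hρtr : ρ.trace = 1) :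
    ptraceControl (NormedSpace.exp ((-Complex.I * (l : ℂ)) • swapOp d) *
        (ρ ⊗ₖ vecMulVec T (star T)) *
        (NormedSpace.exp ((-Complex.I * (l : ℂ)) • swapOp d))ᴴ) =
      ((Real.cos l ^ 2 : ℝ) : ℂ) • ρ + ((Real.sin l ^ 2 : ℝ) : ℂ) • vecMulVec T (star T) +
        (Complex.I * (Real.sin l : ℂ) * (Real.cos l : ℂ)) •
          (ρ * vecMulVec T (star T) - vecMulVec T (star T) * ρ) := by
  have hU : NormedSpace.exp ((-Complex.I * (l : ℂ)) • swapOp d) =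
      (Real.cos l : ℂ) • 1 + (-I * Real.sin l) • swapOp d := by
    rw [show -I * (l : ℂ) = (-l : ℂ) * I by ring,
      exp_mul_I_smul_of_mul_self_eq_one (swapOp_mul_swapOp d), Complex.cos_neg,
      Complex.sin_neg, ← ofReal_cos, ← ofReal_sin, mul_neg, neg_mul]
  have hPtr : (vecMulVec T (star T)).trace = 1 := by
    rw [trace_vecMulVec, dotProduct_comm, hT]
  rw [hU, ptraceControl_conj_kronecker, hPtr, hρtr]
  simp only [RCLike.star_def, conj_ofReal, map_mul, map_neg, conj_I, ofReal_pow]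
  match_scalars
  · ring
  · ring
  · ring
  · linear_combination (-Complex.sin l ^ 2) * I_sq

/-- **Example 2 (weak-swap channel action).** For `U = exp(−iλS)` with `S` the swap operator,
and a controller initialised in the unit-vector target state `T`, the channel
`$(ρ) = Tr_c[U (ρ ⊗ |T⟩⟨T|) Uᴴ]` acts on density operators as
`$(ρ) = cos²λ·ρ + sin²λ·|T⟩⟨T| + i sin λ cos λ·(ρ|T⟩⟨T| − |T⟩⟨T|ρ)`. -/
theorem weak_swap_channel_action {d : ℕ} (l : ℝ)
    (T : Fin d → ℂ) (hT : star T ⬝ᵥ T = 1)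
    (ρ : Matrix (Fin d) (Fin d) ℂ) (hρ : ρ.PosSemidef) (hρtr : ρ.trace = 1) :
    ptraceControl (NormedSpace.exp ((-Complex.I * (l : ℂ)) • swapOp d) *
        (ρ ⊗ₖ vecMulVec T (star T)) *
        (NormedSpace.exp ((-Complex.I * (l : ℂ)) • swapOp d))ᴴ) =
      ((Real.cos l ^ 2 : ℝ) : ℂ) • ρ + ((Real.sin l ^ 2 : ℝ) : ℂ) • vecMulVec T (star T) +
        (Complex.I * (Real.sin l : ℂ) * (Real.cos l : ℂ)) •
          (ρ * vecMulVec T (star T) - vecMulVec T (star T) * ρ) :=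
  weak_swap_channel_action_general l T hT ρ hρtr
end

section
/- Let |T⟩ = |0⟩ ∈ ℂ^d and λ ∈ ℝ with sin λ ≠ 0 and cos λ ≠ 0. Define M_0 = e^{−iλ|T⟩⟨T|}(cos λ · I + (1 − cos λ)|T⟩⟨T|) and, for i = 1, …, d−1, M_i = e^{−iπ(|T⟩⟨i| + |i⟩⟨T|)/2} sin λ |i⟩⟨i|. Then ∑_{i=0}^{d-1} M_i† M_i = I, each M_i satisfies M_i|T⟩ = z_i|T⟩ for some z_i ∈ ℂ, and the vectors M_0†|T⟩, …, M_{d-1}†|T⟩ span ℂ^d; consequently (by Theorem 1) every density operator on ℂ^d converges to |T⟩⟨T| under iteration of the channel $(ρ) = ∑_i M_i ρ M_i†. -/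
/-! In closed form the weak-swap Kraus operators are `M₀ = diag(e^{-iλ}, cos λ, …, cos λ)` and
`Mᵢ = -i sin λ |T⟩⟨i|` for `i ≠ 0`, since `e^{-iπ(|T⟩⟨i| + |i⟩⟨T|)/2}` acts as `-i` times the
swap of `|T⟩` and `|i⟩`. The channel therefore multiplies every entry `ρ_jk` with
`(j, k) ≠ (0, 0)` by `m_j conj(m_k)`, a number of modulus `< 1` because `sin λ ≠ 0`, so those
entries decay geometrically; as the channel preserves the trace, `ρ_00` tends to `tr ρ = 1`. -/

open Matrix Complex ComplexOrder NormedSpace Filter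

section BanachAlgebra

variable {A : Type*} [NormedRing A] [NormedAlgebra ℂ A] [CompleteSpace A]

theorem exp_smul_of_isIdempotentElem {P : A} (hP : IsIdempotentElem P) (c : ℂ) :
    NormedSpace.exp (c • P) = 1 + (Complex.exp c - 1) • P := by
  have hterm : ∀ k : ℕ, (k.factorial⁻¹ : ℂ) • (c • P) ^ k =
      ((k.factorial⁻¹ : ℂ) • c ^ k) • P + if k = 0 then 1 - P else 0 := by
    rintro (_ | k)
    · simp
    · rw [smul_pow, hP.pow_succ_eq, smul_smul, if_neg k.succ_ne_zero, add_zero, smul_eq_mul]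
  have hsum := ((exp_series_hasSum_exp' (𝕂 := ℂ) c).smul_const P).add (hasSum_ite_eq 0 (1 - P))
  simp_rw [← hterm, ← Complex.exp_eq_exp_ℂ] at hsum
  rw [(exp_series_hasSum_exp' (𝕂 := ℂ) (c • P)).unique hsum, sub_smul, one_smul]
  abel

theorem exp_smul_of_mul_self_mul_self_eq {X : A} (hX : X * X * X = X) (c : ℂ) :
    NormedSpace.exp (c • X) = 1 + (Complex.cosh c - 1) • (X * X) + Complex.sinh c • X := by
  set R : A := (2⁻¹ : ℂ) • (X * X + X)
  set S : A := (2⁻¹ : ℂ) • (X * X - X)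
  have hR : IsIdempotentElem R := by
    simp only [IsIdempotentElem, R, smul_mul_smul_comm, mul_add, add_mul, ← mul_assoc, hX]
    module
  have hS : IsIdempotentElem S := by
    simp only [IsIdempotentElem, S, smul_mul_smul_comm, mul_sub, sub_mul, ← mul_assoc, hX]
    module
  have hRS : R * S = 0 := by
    simp only [R, S, smul_mul_smul_comm, mul_sub, add_mul, ← mul_assoc, hX]
    module
  have hSR : S * R = 0 := by
    simp only [R, S, smul_mul_smul_comm, mul_add, sub_mul, ← mul_assoc, hX]
    module
  have hcomm : Commute (c • R) ((-c) • S) := by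
    simp only [Commute, SemiconjBy, smul_mul_smul_comm, hRS, hSR, smul_zero]
  have hsplit : c • X = c • R + (-c) • S := by
    simp only [R, S]
    module
  rw [hsplit, exp_add_of_commute_of_mem_ball (𝕂 := ℂ) hcomm (by simp [expSeries_radius_eq_top])
      (by simp [expSeries_radius_eq_top]),
    exp_smul_of_isIdempotentElem hR, exp_smul_of_isIdempotentElem hS, add_mul, mul_add, mul_add,
    smul_mul_smul_comm, hRS, Complex.cosh, Complex.sinh]
  simp only [R, S, mul_one, one_mul, smul_zero, add_zero]
  module

end BanachAlgebra

variable {n : Type*} [DecidableEq n]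

theorem vecMulVec_single_star_single {R : Type*} [Semiring R] [StarRing R] (t : n) :
    vecMulVec (Pi.single t (1 : R)) (star (Pi.single t 1)) = single t t 1 := by
  simp [single_eq_single_vecMulVec_single]

variable [Fintype n]

theorem exp_smul_single_mul (t : n) (c a : ℂ) :
    NormedSpace.exp (c • single t t (1 : ℂ)) * (a • 1 + (1 - a) • single t t 1) =
      diagonal (Function.update (fun _ => a) t (Complex.exp c)) := by
  rw [← diagonal_single, ← diagonal_smul, exp_diagonal]
  ext i j
  by_cases hij : i = j
  · subst hij
    by_cases hi : i = t
    · subst hi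
      simp [Complex.exp_eq_exp_ℂ]
    · simp [hi]
  · simp [hij]

theorem exp_smul_single_add_single_mul_single {a b : n} (hab : a ≠ b) (c : ℂ) :
    NormedSpace.exp (c • (single a b (1 : ℂ) + single b a 1)) * single b b 1 =
      Complex.cosh c • single b b 1 + Complex.sinh c • single a b 1 := by
  have hX : (single a b (1 : ℂ) + single b a 1) * (single a b 1 + single b a 1) *
      (single a b 1 + single b a 1) = single a b 1 + single b a 1 := by
    simp [add_mul, mul_add, hab, hab.symm]
  have hexp : NormedSpace.exp (c • (single a b (1 : ℂ) + single b a 1)) = _ :=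
    open scoped Norms.Operator in exp_smul_of_mul_self_mul_self_eq hX c
  rw [hexp]
  simp [add_mul, mul_add, hab, hab.symm]
  rw [← single_add, add_sub_cancel]

theorem exp_neg_I_pi_div_two_smul_single_add_single_mul_single {a b : n} (hab : a ≠ b) :
    NormedSpace.exp ((-I * ((Real.pi : ℂ) / 2)) • (single a b (1 : ℂ) + single b a 1)) *
      single b b 1 = -I • single a b 1 := by
  have harg : -I * ((Real.pi : ℂ) / 2) = -((Real.pi : ℂ) / 2) * I := by ring
  rw [exp_smul_single_add_single_mul_single hab, harg, cosh_mul_I, sinh_mul_I, Complex.cos_neg,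
    Complex.sin_neg, Complex.cos_pi_div_two, Complex.sin_pi_div_two, zero_smul, zero_add,
    neg_one_mul]

def krausMap {R ι : Type*} [CommSemiring R] [StarRing R] [Fintype ι]
    (M : ι → Matrix n n R) (σ : Matrix n n R) : Matrix n n R :=
  ∑ i, M i * σ * (M i)ᴴ

theorem trace_krausMap {R ι : Type*} [CommSemiring R] [StarRing R] [Fintype ι]
    {M : ι → Matrix n n R} (hM : ∑ i, (M i)ᴴ * M i = 1) (σ : Matrix n n R) :
    (krausMap M σ).trace = σ.trace := by
  simp only [krausMap, trace_sum, trace_mul_cycle (M _)]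
  rw [← trace_sum, ← Finset.sum_mul, hM, one_mul]

theorem trace_iterate_krausMap {R ι : Type*} [CommSemiring R] [StarRing R] [Fintype ι]
    {M : ι → Matrix n n R} (hM : ∑ i, (M i)ᴴ * M i = 1) (σ : Matrix n n R) (N : ℕ) :
    ((krausMap M)^[N] σ).trace = σ.trace :=
  congrFun (Function.iterate_invariant (g := trace) (funext (trace_krausMap hM)) N) σ

def dampingKraus (t : n) (m : n → ℂ) (s : ℂ) (i : n) : Matrix n n ℂ :=
  if i = t then diagonal m else s • single t i 1

namespace dampingKraus

variable (t : n) (m : n → ℂ) (s : ℂ)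

theorem mulVec_single (i : n) :
    dampingKraus t m s i *ᵥ Pi.single t 1 = (if i = t then m t else 0) • Pi.single t 1 := by
  unfold dampingKraus
  split_ifs with hi
  · ext j
    by_cases hj : j = t <;> simp [mulVec_diagonal, hj]
  · rw [smul_mulVec, single_mulVec_eq]
    simp [hi]

theorem conjTranspose_mulVec_single (i : n) :
    (dampingKraus t m s i)ᴴ *ᵥ Pi.single t 1 =
      (if i = t then star (m t) else star s) • Pi.single i 1 := by
  unfold dampingKraus
  split_ifs with hi
  · subst hi
    ext j
    by_cases hj : j = i <;> simp [mulVec_diagonal, hj]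
  · rw [conjTranspose_smul, conjTranspose_single, smul_mulVec, single_mulVec_eq]
    simp

theorem span_conjTranspose_mulVec_single (hmt : m t ≠ 0) (hs : s ≠ 0) :
    Submodule.span ℂ (Set.range fun i => (dampingKraus t m s i)ᴴ *ᵥ Pi.single t 1) = ⊤ := by
  let w : n → ℂˣ := fun i =>
    Units.mk0 (if i = t then star (m t) else star s) (by split_ifs <;> simpa)
  rw [← ((Pi.basisFun ℂ n).unitsSMul w).span_eq]
  congr 2
  ext i : 1
  rw [conjTranspose_mulVec_single, Module.Basis.unitsSMul_apply]
  simp [w]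

theorem sum_conjTranspose_mul (hmt : ‖m t‖ = 1) (hm : ∀ j ≠ t, ‖m j‖ ^ 2 + ‖s‖ ^ 2 = 1) :
    ∑ i, (dampingKraus t m s i)ᴴ * dampingKraus t m s i = 1 := by
  have hrest : ∑ i ∈ Finset.univ.erase t, (dampingKraus t m s i)ᴴ * dampingKraus t m s i =
      diagonal fun j => if j = t then 0 else star s * s := by
    rw [← sum_single_eq_diagonal, ← Finset.sum_erase Finset.univ (a := t) (by simp)]
    refine Finset.sum_congr rfl fun i hi => ?_
    simp [dampingKraus, Finset.ne_of_mem_erase hi]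
  rw [← Finset.add_sum_erase _ _ (Finset.mem_univ t), hrest, dampingKraus, if_pos rfl,
    diagonal_conjTranspose, diagonal_mul_diagonal, diagonal_add, ← diagonal_one]
  congr 1
  funext j
  split_ifs with hj
  · subst hj
    simp [Complex.conj_mul', hmt]
  · simp only [Pi.star_apply, RCLike.star_def, Complex.conj_mul']
    exact_mod_cast hm j hj

theorem krausMap_apply {j k : n} (hjk : ¬(j = t ∧ k = t)) (σ : Matrix n n ℂ) :
    krausMap (dampingKraus t m s) σ j k = m j * σ j k * star (m k) := by
  rw [krausMap, Matrix.sum_apply, Fintype.sum_eq_single t]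
  · simp [dampingKraus, mul_diagonal, diagonal_mul]
  · intro i hi
    simp only [dampingKraus, if_neg hi, conjTranspose_smul, conjTranspose_single, smul_mul_assoc,
      mul_smul_comm, single_mul_mul_single]
    simp [single_apply_of_ne (h := show ¬(t = j ∧ t = k) by tauto)]

theorem iterate_krausMap_apply {j k : n} (hjk : ¬(j = t ∧ k = t)) (σ : Matrix n n ℂ) (N : ℕ) :
    (krausMap (dampingKraus t m s))^[N] σ j k = (m j * star (m k)) ^ N * σ j k := by
  induction N with
  | zero => simp
  | succ N ih =>
    rw [Function.iterate_succ_apply', krausMap_apply t m s hjk, ih]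
    ring

theorem tendsto_iterate_krausMap_apply_nhds_zero (hmt : ‖m t‖ = 1)
    (hm : ∀ j ≠ t, ‖m j‖ ^ 2 + ‖s‖ ^ 2 = 1) (hs : s ≠ 0) {j k : n} (hjk : ¬(j = t ∧ k = t))
    (ρ : Matrix n n ℂ) :
    Tendsto (fun N => (krausMap (dampingKraus t m s))^[N] ρ j k) atTop (nhds 0) := by
  have hlt : ∀ j ≠ t, ‖m j‖ < 1 := fun j hj => by
    nlinarith [hm j hj, norm_pos_iff.2 hs, norm_nonneg (m j)]
  have hle : ∀ j, ‖m j‖ ≤ 1 := fun j => by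
    by_cases hj : j = t
    · rw [hj, hmt]
    · exact (hlt j hj).le
  have hnorm : ‖m j * star (m k)‖ < 1 := by
    rw [norm_mul, norm_star]
    rcases not_and_or.1 hjk with hj | hk
    · exact mul_lt_one_of_nonneg_of_lt_one_left (norm_nonneg _) (hlt j hj) (hle k)
    · exact mul_lt_one_of_nonneg_of_lt_one_right (hle j) (norm_nonneg _) (hlt k hk)
  simp_rw [iterate_krausMap_apply t m s hjk]
  simpa using (tendsto_pow_atTop_nhds_zero_of_norm_lt_one hnorm).mul_const (ρ j k)

theorem tendsto_iterate_krausMap (hmt : ‖m t‖ = 1) (hm : ∀ j ≠ t, ‖m j‖ ^ 2 + ‖s‖ ^ 2 = 1)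
    (hs : s ≠ 0) (ρ : Matrix n n ℂ) :
    Tendsto (fun N => (krausMap (dampingKraus t m s))^[N] ρ) atTop
      (nhds (ρ.trace • single t t 1)) := by
  refine tendsto_pi_nhds.2 fun j => tendsto_pi_nhds.2 fun k => ?_
  by_cases hjk : j = t ∧ k = t
  · rw [hjk.1, hjk.2, Matrix.smul_apply, single_apply_same, smul_eq_mul, mul_one]
    have hdiag : ∀ N, (krausMap (dampingKraus t m s))^[N] ρ t t =
        ρ.trace - ∑ i ∈ Finset.univ.erase t, (krausMap (dampingKraus t m s))^[N] ρ i i := by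
      intro N
      rw [← trace_iterate_krausMap (sum_conjTranspose_mul t m s hmt hm) ρ N, trace,
        ← Finset.add_sum_erase _ _ (Finset.mem_univ t)]
      simp
    have hrest := tendsto_finsetSum (Finset.univ.erase t) fun i hi =>
      tendsto_iterate_krausMap_apply_nhds_zero t m s hmt hm hs (k := i)
        (fun h => Finset.ne_of_mem_erase hi h.1) ρ
    simp_rw [hdiag]
    simpa only [Finset.sum_const_zero, sub_zero] using tendsto_const_nhds.sub hrest
  · simpa [single_apply_of_ne (h := fun h => hjk ⟨h.1.symm, h.2.symm⟩)] using
      tendsto_iterate_krausMap_apply_nhds_zero t m s hmt hm hs hjk ρ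

end dampingKraus

theorem weak_swap_kraus_control_general {d : ℕ} [NeZero d] (l : ℝ)
    (hsin : Real.sin l ≠ 0) :
    let T : Fin d → ℂ := Pi.single (0 : Fin d) 1
    let M : Fin d → Matrix (Fin d) (Fin d) ℂ := fun i =>
      if i = 0 then
        NormedSpace.exp ((-Complex.I * (l : ℂ)) • vecMulVec T (star T)) *
          ((Real.cos l : ℂ) • (1 : Matrix (Fin d) (Fin d) ℂ) +
            ((1 - Real.cos l : ℝ) : ℂ) • vecMulVec T (star T))
      else
        NormedSpace.exp ((-Complex.I * ((Real.pi : ℂ) / 2)) •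
            (Matrix.single (0 : Fin d) i (1 : ℂ) +
              Matrix.single i (0 : Fin d) (1 : ℂ))) *
          ((Real.sin l : ℂ) • Matrix.single i i (1 : ℂ))
    (∑ i, (M i)ᴴ * M i = 1) ∧
    (∀ i, ∃ z : ℂ, M i *ᵥ T = z • T) ∧
    Submodule.span ℂ (Set.range fun i => (M i)ᴴ *ᵥ T) = ⊤ ∧
    (∀ ρ : Matrix (Fin d) (Fin d) ℂ, ρ.PosSemidef → ρ.trace = 1 →
      Tendsto (fun k => (fun σ => ∑ i, M i * σ * (M i)ᴴ)^[k] ρ) atTop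
        (nhds (vecMulVec T (star T)))) := by
  intro T M
  have hT : vecMulVec T (star T) = single 0 0 1 := vecMulVec_single_star_single 0
  set m : Fin d → ℂ := Function.update (fun _ => (Real.cos l : ℂ)) 0 (Complex.exp (-I * l))
  set s : ℂ := -I * Real.sin l
  have hM : M = dampingKraus 0 m s := by
    funext i
    by_cases hi : i = 0
    · subst hi
      simp only [M, dampingKraus, if_pos rfl, hT, ofReal_sub, ofReal_one]
      exact exp_smul_single_mul (0 : Fin d) _ _
    · simp only [M, dampingKraus, if_neg hi]
      rw [mul_smul_comm, exp_neg_I_pi_div_two_smul_single_add_single_mul_single (Ne.symm hi),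
        smul_smul, mul_comm]
  have hmt : ‖m 0‖ = 1 := by simpa [m] using norm_exp_I_mul_ofReal (-l)
  have hm : ∀ j ≠ 0, ‖m j‖ ^ 2 + ‖s‖ ^ 2 = 1 := fun j hj => by
    simp only [m, s, Function.update_of_ne hj, norm_mul, norm_neg, Complex.norm_I, one_mul,
      Complex.norm_real, Real.norm_eq_abs, sq_abs, Real.cos_sq_add_sin_sq]
  have hs : s ≠ 0 := mul_ne_zero (neg_ne_zero.2 I_ne_zero) (ofReal_ne_zero.2 hsin)
  rw [hM]
  refine ⟨dampingKraus.sum_conjTranspose_mul 0 m s hmt hm,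
    fun i => ⟨_, dampingKraus.mulVec_single 0 m s i⟩,
    dampingKraus.span_conjTranspose_mulVec_single 0 m s (by simp [m, Complex.exp_ne_zero]) hs,
    fun ρ _ hρ => ?_⟩
  have hlim := dampingKraus.tendsto_iterate_krausMap 0 m s hmt hm hs ρ
  rwa [hρ, one_smul, ← hT] at hlim

/-- **Example 2 (Kraus operators of the weak swap).** For the target `|T⟩ = |0⟩ ∈ ℂ^d` and
`λ ∈ ℝ` with `sin λ ≠ 0` and `cos λ ≠ 0`, the operators
`M₀ = e^{−iλ|T⟩⟨T|}(cos λ·I + (1 − cos λ)|T⟩⟨T|)` and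
`Mᵢ = e^{−iπ(|T⟩⟨i| + |i⟩⟨T|)/2} sin λ |i⟩⟨i|` (for `i ≠ 0`) satisfy the completeness relation
and the fixed-point condition with respect to `T`, the vectors `Mᵢᴴ|T⟩` span `ℂ^d`, and
consequently every density operator converges to `|T⟩⟨T|` under iteration of the channel
`ρ ↦ ∑ i, Mᵢ ρ Mᵢᴴ`. -/
theorem weak_swap_kraus_control {d : ℕ} [NeZero d] (l : ℝ)
    (hsin : Real.sin l ≠ 0) (hcos : Real.cos l ≠ 0) :
    let T : Fin d → ℂ := Pi.single (0 : Fin d) 1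
    let M : Fin d → Matrix (Fin d) (Fin d) ℂ := fun i =>
      if i = 0 then
        NormedSpace.exp ((-Complex.I * (l : ℂ)) • vecMulVec T (star T)) *
          ((Real.cos l : ℂ) • (1 : Matrix (Fin d) (Fin d) ℂ) +
            ((1 - Real.cos l : ℝ) : ℂ) • vecMulVec T (star T))
      else
        NormedSpace.exp ((-Complex.I * ((Real.pi : ℂ) / 2)) •
            (Matrix.single (0 : Fin d) i (1 : ℂ) +
              Matrix.single i (0 : Fin d) (1 : ℂ))) *
          ((Real.sin l : ℂ) • Matrix.single i i (1 : ℂ))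
    (∑ i, (M i)ᴴ * M i = 1) ∧
    (∀ i, ∃ z : ℂ, M i *ᵥ T = z • T) ∧
    Submodule.span ℂ (Set.range fun i => (M i)ᴴ *ᵥ T) = ⊤ ∧
    (∀ ρ : Matrix (Fin d) (Fin d) ℂ, ρ.PosSemidef → ρ.trace = 1 →
      Tendsto (fun k => (fun σ => ∑ i, M i * σ * (M i)ᴴ)^[k] ρ) atTop
        (nhds (vecMulVec T (star T)))) :=
  weak_swap_kraus_control_general l hsin
end
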